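/- arXiv:2307.01471 — 10 statements merged into one kernel-verified Lean document; each statement's English description precedes it below -/
import Mathlib

section
/- Let γ = (√5−1)/2. The function G : ℕ → ℕ defined by G(n) = ⌊(n+1)γ⌋ satisfies G(1) = 1 and the Hofstadter recursion G(n) = n − G(G(n−1)) for all n ≥ 2 (and also G(0) = 0). -/
/-!
Write `γ = φ⁻¹`, so that `γ² = 1 - γ` and `1/γ = 1 + γ = φ`. For `a = ⌊kγ⌋` and `t = fract (kγ)`
these identities give `(a + 1)γ = (k - a) + (γ - tφ)` and `(k + 1)γ = a + (t + γ)`, so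
`⌊(a + 1)γ⌋ + ⌊(k + 1)γ⌋ = k + ⌊t + γ⌋ + ⌊γ - tφ⌋`. The two correction terms are both `0`
when `t < γ²` and are `1` and `-1` when `t > γ²`; `t = γ²` would make `(k + 1)γ` an integer.
With `G n = ⌊(n + 1)γ⌋` and `k = n` this reads `G (G (n - 1)) + G n = n`.
-/

open Real goldenRatio

namespace Real

lemma inv_goldenRatio_eq : φ⁻¹ = (√5 - 1) / 2 := by
  rw [inv_goldenRatio, goldenConj]
  ring

lemma inv_goldenRatio_sq : φ⁻¹ ^ 2 = 1 - φ⁻¹ := by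
  rw [inv_goldenRatio, neg_sq, goldenConj_sq]
  ring

lemma goldenRatio_eq_one_add_inv : φ = 1 + φ⁻¹ := by
  rw [inv_goldenRatio]
  linarith [goldenRatio_add_goldenConj]

lemma inv_goldenRatio_pos : 0 < φ⁻¹ := inv_pos.mpr goldenRatio_pos

lemma inv_goldenRatio_lt_one : φ⁻¹ < 1 := inv_lt_one_of_one_lt₀ one_lt_goldenRatio

lemma floor_add_inv_goldenRatio_add_floor_inv_goldenRatio_sub_mul_eq_zero {t : ℝ} (ht₀ : 0 ≤ t)
    (ht₁ : t < 1) (ht : t ≠ 1 - φ⁻¹) : ⌊t + φ⁻¹⌋ + ⌊φ⁻¹ - t * φ⌋ = 0 := by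
  have hφ := goldenRatio_eq_one_add_inv
  have hφγ : φ * φ⁻¹ = 1 := mul_inv_cancel₀ goldenRatio_ne_zero
  rcases ht.lt_or_gt with hlt | hgt
  · have hsum : ⌊t + φ⁻¹⌋ = 0 :=
      Int.floor_eq_zero_iff.mpr ⟨by linarith [inv_goldenRatio_pos], by linarith⟩
    have hdiff : ⌊φ⁻¹ - t * φ⌋ = 0 := Int.floor_eq_zero_iff.mpr
      ⟨by nlinarith [goldenRatio_pos], by nlinarith [inv_goldenRatio_pos]⟩
    rw [hsum, hdiff, add_zero]
  · have hsum : ⌊t + φ⁻¹⌋ = 1 := by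
      rw [Int.floor_eq_iff]
      constructor <;> push_cast <;> linarith [inv_goldenRatio_lt_one]
    have hdiff : ⌊φ⁻¹ - t * φ⌋ = -1 := by
      rw [Int.floor_eq_iff]
      constructor <;> push_cast <;> nlinarith [goldenRatio_pos]
    rw [hsum, hdiff]
    norm_num

lemma floor_floor_mul_inv_goldenRatio_add_floor (k : ℤ) (hk : k ≠ -1) :
    ⌊((⌊k * φ⁻¹⌋ : ℝ) + 1) * φ⁻¹⌋ + ⌊(k + 1) * φ⁻¹⌋ = k := by
  set a := ⌊k * φ⁻¹⌋
  set t := Int.fract (k * φ⁻¹)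
  have hkγ : (a : ℝ) + t = k * φ⁻¹ := Int.floor_add_fract _
  have hγ := inv_goldenRatio_sq
  have hφ := goldenRatio_eq_one_add_inv
  have ha_succ : ((a : ℝ) + 1) * φ⁻¹ = (φ⁻¹ - t * φ) + ((k - a : ℤ) : ℝ) := by
    push_cast
    linear_combination φ⁻¹ * hkγ + hkγ + k * hγ + t * hφ
  have hk_succ : ((k : ℝ) + 1) * φ⁻¹ = (t + φ⁻¹) + (a : ℝ) := by linear_combination -hkγ
  have ht : t ≠ 1 - φ⁻¹ := by
    intro ht
    refine (goldenRatio_irrational.inv.intCast_mul (show k + 1 ≠ 0 by omega)).ne_int (a + 1) ?_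
    push_cast
    linear_combination -hkγ + ht
  rw [ha_succ, hk_succ, Int.floor_add_intCast, Int.floor_add_intCast]
  linear_combination floor_add_inv_goldenRatio_add_floor_inv_goldenRatio_sub_mul_eq_zero
    (Int.fract_nonneg _) (Int.fract_lt_one _) ht

lemma natFloor_natFloor_mul_inv_goldenRatio_add_natFloor (n : ℕ) :
    ⌊((⌊n * φ⁻¹⌋₊ : ℝ) + 1) * φ⁻¹⌋₊ + ⌊((n : ℝ) + 1) * φ⁻¹⌋₊ = n := by
  have hγ := inv_goldenRatio_pos.le
  have h := floor_floor_mul_inv_goldenRatio_add_floor n (by omega)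
  push_cast at h
  zify
  rw [natCast_floor_eq_intCast_floor (by positivity), Int.natCast_floor_eq_floor (by positivity),
    Int.natCast_floor_eq_floor (by positivity)]
  exact h

end Real

/-- Hofstadter's G-sequence: the slow Beatty sequence `G(n) = ⌊(n+1)γ⌋` with
`γ = (√5 − 1)/2` satisfies `G(0) = 0`, `G(1) = 1`, and the Hofstadter recursion
`G(n) = n − G(G(n−1))` for all `n ≥ 2`. -/
theorem hofstadter_G_eq_slow_beatty
    (γ : ℝ) (hγ : γ = (Real.sqrt 5 - 1) / 2)
    (G : ℕ → ℕ) (hG : ∀ n : ℕ, G n = ⌊((n : ℝ) + 1) * γ⌋₊) :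
    G 0 = 0 ∧ G 1 = 1 ∧ ∀ n : ℕ, 2 ≤ n → G n = n - G (G (n - 1)) := by
  rw [← inv_goldenRatio_eq] at hγ
  subst hγ
  have hrec : ∀ n : ℕ, 1 ≤ n → G (G (n - 1)) + G n = n := by
    intro n hn
    have hpred : ((n - 1 : ℕ) : ℝ) + 1 = n := by rw [Nat.cast_pred hn]; ring
    rw [hG n, hG (n - 1), hpred, hG]
    exact natFloor_natFloor_mul_inv_goldenRatio_add_natFloor n
  have hG0 : G 0 = 0 := by
    rw [hG, Nat.floor_eq_zero]
    simpa using inv_goldenRatio_lt_one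
  have hG1 : G 1 = 1 := by
    have h := hrec 1 le_rfl
    rwa [Nat.sub_self, hG0, hG0, zero_add] at h
  exact ⟨hG0, hG1, fun n hn => by have := hrec n (by omega); omega⟩
end

section
/- Let γ ∈ (0,1) be irrational and let s(n) = ⌊(n+1)γ⌋ for n ≥ 0. Then for every n ≥ 1: s(n) = s(n−1) if and only if there exists m ≥ 1 with n = ⌊m/(1−γ)⌋, and s(n) = s(n−1) + 1 if and only if there exists m ≥ 1 with n = ⌊m/γ⌋. -/
/-- Kimberling–Stolarsky: for irrational `γ ∈ (0,1)` and `s(n) = ⌊(n+1)γ⌋`,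
the positions `n ≥ 1` with `s(n) = s(n−1)` are exactly the Beatty sequence of
`1/(1−γ)`, and those with `s(n) = s(n−1) + 1` are exactly the Beatty sequence
of `1/γ`. -/
theorem kimberling_stolarsky
    (γ : ℝ) (hirr : Irrational γ) (h0 : 0 < γ) (h1 : γ < 1)
    (s : ℕ → ℕ) (hs : ∀ n : ℕ, s n = ⌊((n : ℝ) + 1) * γ⌋₊) :
    ∀ n : ℕ, 1 ≤ n →
      ((s n = s (n - 1) ↔ ∃ m : ℕ, 1 ≤ m ∧ n = ⌊(m : ℝ) / (1 - γ)⌋₊) ∧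
       (s n = s (n - 1) + 1 ↔ ∃ m : ℕ, 1 ≤ m ∧ n = ⌊(m : ℝ) / γ⌋₊)) := by
  have h1' : (0:ℝ) < 1 - γ := by linarith
  have key : ∀ (a : ℕ) (b : ℤ), 1 ≤ a → (a : ℝ) * γ ≠ (b : ℝ) := by
    intro a b ha h
    refine hirr ⟨(b : ℚ) / (a : ℚ), ?_⟩
    have ha' : (a : ℝ) ≠ 0 := by positivity
    push_cast
    field_simp
    linarith
  intro n hn
  have hn' : (1:ℝ) ≤ (n:ℝ) := by exact_mod_cast hn
  set A := ⌊(n : ℝ) * γ⌋₊ with hA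
  set B := ⌊((n : ℝ) + 1) * γ⌋₊ with hB
  have hsn : s n = B := hs n
  have hsn1 : s (n - 1) = A := by
    rw [hs (n - 1)]
    congr 2
    have : ((n - 1 : ℕ) : ℝ) = (n : ℝ) - 1 := by
      push_cast [Nat.cast_sub hn]; ring
    rw [this]; ring
  have hAle : (A : ℝ) ≤ (n:ℝ) * γ := Nat.floor_le (by positivity)
  have hAlt : (A : ℝ) < (n:ℝ) * γ := by
    rcases lt_or_eq_of_le hAle with h | h
    · exact h
    · exact (key n A hn (by push_cast; linarith)).elim
  have hAlt1 : (n : ℝ) * γ < A + 1 := Nat.lt_floor_add_one _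
  have hBle : (B : ℝ) ≤ ((n:ℝ) + 1) * γ := Nat.floor_le (by positivity)
  have hBlt : (B : ℝ) < ((n:ℝ) + 1) * γ := by
    rcases lt_or_eq_of_le hBle with h | h
    · exact h
    · exact (key (n+1) B (by omega) (by push_cast; linarith)).elim
  have hBlt1 : ((n : ℝ) + 1) * γ < B + 1 := Nat.lt_floor_add_one _
  have hABle : A ≤ B := Nat.floor_le_floor (by nlinarith)
  have hBA1 : B ≤ A + 1 := by
    have h2 : (B:ℝ) < ((A + 2 : ℕ) : ℝ) := by push_cast; nlinarith
    have := Nat.cast_lt (α := ℝ) |>.mp h2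
    omega
  -- Claim: B = A + 1 ↔ n is in the Beatty sequence of 1/γ
  have claim_up : B = A + 1 ↔ ∃ m : ℕ, 1 ≤ m ∧ n = ⌊(m : ℝ) / γ⌋₊ := by
    constructor
    · intro hBA
      refine ⟨A + 1, by omega, ?_⟩
      have hm1 : (n:ℝ) * γ < ((A:ℝ) + 1) := hAlt1
      have hm2 : ((A:ℝ) + 1) ≤ ((n:ℝ) + 1) * γ := by
        rw [hBA] at hBle; push_cast at hBle; linarith
      have hm2' : ((A:ℝ) + 1) < ((n:ℝ) + 1) * γ := by
        rcases lt_or_eq_of_le hm2 with h | h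
        · exact h
        · exact (key (n+1) (A+1) (by omega) (by push_cast; linarith)).elim
      symm
      rw [Nat.floor_eq_iff (by positivity)]
      constructor
      · rw [le_div_iff₀ h0]; push_cast; linarith
      · rw [div_lt_iff₀ h0]; push_cast; linarith
    · rintro ⟨m, hm, rfl⟩
      have hle : ((⌊(m : ℝ) / γ⌋₊ : ℝ)) ≤ (m:ℝ) / γ := Nat.floor_le (by positivity)
      set N := ⌊(m : ℝ) / γ⌋₊
      have hlt1 : (m:ℝ) / γ < (N:ℝ) + 1 := Nat.lt_floor_add_one _
      have hltstrict : (N:ℝ) < (m:ℝ) / γ := by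
        rcases lt_or_eq_of_le hle with h | h
        · exact h
        · exfalso
          apply key N m (by
            by_contra hN0
            have : N = 0 := by omega
            rw [this] at h
            have : (m:ℝ) = 0 := by
              field_simp at h
              linarith [h.symm]
            have : m = 0 := by exact_mod_cast this
            omega)
          have : (N:ℝ) * γ = (m:ℝ) := by
            field_simp at h
            linarith [h]
          push_cast; linarith
      -- N γ < m < (N+1) γ
      have ha : (N:ℝ) * γ < (m:ℝ) := by
        rw [← lt_div_iff₀ h0] at *; exact hltstrict
      have hb : (m:ℝ) < ((N:ℝ) + 1) * γ := by
        rw [← div_lt_iff₀ h0]; exact hlt1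
      have h1n : A < m := by
        have : (A:ℝ) < (m:ℝ) := lt_of_le_of_lt hAle ha
        exact_mod_cast this
      have h2n : m ≤ B := Nat.le_floor (by linarith)
      omega
  -- Claim: B = A ↔ n is in the Beatty sequence of 1/(1-γ)
  have claim_eq : B = A ↔ ∃ m : ℕ, 1 ≤ m ∧ n = ⌊(m : ℝ) / (1 - γ)⌋₊ := by
    constructor
    · intro hBA
      have hAn : A < n := by
        have : (A:ℝ) < (n:ℝ) := by nlinarith
        exact_mod_cast this
      refine ⟨n - A, by omega, ?_⟩
      have hmr : ((n - A : ℕ) : ℝ) = (n:ℝ) - (A:ℝ) := by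
        push_cast [Nat.cast_sub hAn.le]; ring
      have hup : ((n:ℝ) + 1) * γ < (A:ℝ) + 1 := by
        rw [hBA] at hBlt1; linarith
      symm
      rw [Nat.floor_eq_iff (by positivity)]
      constructor
      · rw [le_div_iff₀ h1', hmr]; nlinarith
      · rw [div_lt_iff₀ h1', hmr]; nlinarith
    · rintro ⟨m, hm, rfl⟩
      have hle : ((⌊(m : ℝ) / (1 - γ)⌋₊ : ℝ)) ≤ (m:ℝ) / (1 - γ) :=
        Nat.floor_le (by positivity)
      set N := ⌊(m : ℝ) / (1 - γ)⌋₊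
      have hlt1 : (m:ℝ) / (1 - γ) < (N:ℝ) + 1 := Nat.lt_floor_add_one _
      -- we are proving the statement for n := N, with hypotheses about N
      -- from the outer context: here n = N, so reuse the outer facts
      have hltstrict : (N:ℝ) < (m:ℝ) / (1 - γ) := by
        rcases lt_or_eq_of_le hle with h | h
        · exact h
        · exfalso
          have hNγ : (N:ℝ) * (1 - γ) = (m:ℝ) := by
            field_simp at h; linarith [h]
          apply key N ((N:ℤ) - (m:ℤ)) hn
          push_cast
          linarith
      have ha : (N:ℝ) * (1 - γ) < (m:ℝ) := by
        rw [← lt_div_iff₀ h1']; exact hltstrict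
      have hb : (m:ℝ) < ((N:ℝ) + 1) * (1 - γ) := by
        rw [← div_lt_iff₀ h1']; exact hlt1
      have hmN : m ≤ N := by
        have : (m:ℝ) < (N:ℝ) + 1 := by nlinarith
        have : m < N + 1 := by exact_mod_cast this
        omega
      have hBub : B ≤ N - m := by
        have : (B:ℝ) < ((N - m : ℕ) : ℝ) + 1 := by
          push_cast [Nat.cast_sub hmN]
          nlinarith
        have : B < (N - m) + 1 := by exact_mod_cast this
        omega
      have hAlb : N - m ≤ A := by
        rw [hA]
        refine Nat.le_floor ?_
        push_cast [Nat.cast_sub hmN]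
        have ha' := ha
        rw [mul_sub, mul_one] at ha'
        linarith
      omega
  refine ⟨?_, ?_⟩
  · rw [hsn, hsn1]; exact claim_eq
  · rw [hsn, hsn1]; exact claim_up
end

section
/- Let φ = (1+√5)/2, γ = (√5−1)/2, L(n) = ⌊nφ⌋, U(n) = ⌊nφ²⌋. Let W : ℕ → ℕ satisfy W(0) = 0 and, for all k ≥ 1, W(L(k)) = U(k) and W(U(k)) = L(k). Then for every n ≥ 0, W(0) + W(1) + ⋯ + W(n) = (n+1)·⌊(n+1)γ⌋; in particular the averaged Wythoff swap sequence (W(0)+⋯+W(n))/(n+1) equals Hofstadter's G-sequence G(n) = ⌊(n+1)γ⌋. -/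
/-!
Put `G n = ⌊(n+1)γ⌋`. Since `γ = 1/φ` and `1 - γ = 1/φ²`, the Beatty sequences are "inverted" by
`G`: `L k ≤ n ↔ k ≤ G n` and `U k ≤ n ↔ k ≤ n - G n`. As `G` grows by `0` or `1` at each step,
`n + 1` is `L (G n + 1)` when `G` jumps and `U (n + 1 - G n)` otherwise. Using `U k = L k + k`,
`W (n + 1)` is `n + 2 + G n` in the first case and `G n` in the second, which is exactly the increment
of `(n + 1) * G n`.
-/

open Finset Real

theorem Nat.floor_le_iff_lt_add_one {x : ℝ} (hx : 0 ≤ x) (n : ℕ) : ⌊x⌋₊ ≤ n ↔ x < n + 1 := by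
  rw [← Nat.lt_succ_iff, Nat.floor_lt hx]
  push_cast
  rfl

theorem Irrational.natCast_lt_iff_le_floor {y : ℝ} (hy : Irrational y) (hy0 : 0 ≤ y) (k : ℕ) :
    (k : ℝ) < y ↔ k ≤ ⌊y⌋₊ := by
  rw [Nat.le_floor_iff hy0, lt_iff_le_and_ne]
  exact and_iff_left (hy.ne_nat k).symm

theorem Nat.floor_add_eq_or {x c : ℝ} (hx : 0 ≤ x) (hc0 : 0 ≤ c) (hc1 : c ≤ 1) :
    ⌊x + c⌋₊ = ⌊x⌋₊ ∨ ⌊x + c⌋₊ = ⌊x⌋₊ + 1 := by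
  have hlo := Nat.floor_le_floor (by linarith : x ≤ x + c)
  have hhi := Nat.floor_le_floor (by linarith : x + c ≤ x + 1)
  rw [Nat.floor_add_one hx] at hhi
  omega

theorem Nat.floor_succ_mul_eq_or {c : ℝ} (hc0 : 0 ≤ c) (hc1 : c ≤ 1) (n : ℕ) :
    ⌊(((n + 1 : ℕ) : ℝ) + 1) * c⌋₊ = ⌊((n : ℝ) + 1) * c⌋₊ ∨
      ⌊(((n + 1 : ℕ) : ℝ) + 1) * c⌋₊ = ⌊((n : ℝ) + 1) * c⌋₊ + 1 := by
  have h : (((n + 1 : ℕ) : ℝ) + 1) * c = ((n : ℝ) + 1) * c + c := by push_cast; ring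
  rw [h]
  exact Nat.floor_add_eq_or (by positivity) hc0 hc1

section Beatty

variable {r s : ℝ}

theorem galoisConnection_floor_mul (hr : 0 < r) (hirr : Irrational r) :
    GaloisConnection (fun k : ℕ => ⌊k * r⌋₊) (fun n : ℕ => ⌊((n : ℝ) + 1) * r⁻¹⌋₊) := by
  intro k n
  have hirr' : Irrational (((n : ℝ) + 1) * r⁻¹) := by
    exact_mod_cast hirr.inv.natCast_mul n.succ_ne_zero
  calc ⌊k * r⌋₊ ≤ n ↔ (k : ℝ) * r < n + 1 := Nat.floor_le_iff_lt_add_one (by positivity) n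
    _ ↔ (k : ℝ) < (n + 1) * r⁻¹ := by rw [← div_eq_mul_inv, lt_div_iff₀ hr]
    _ ↔ k ≤ ⌊((n : ℝ) + 1) * r⁻¹⌋₊ := hirr'.natCast_lt_iff_le_floor (by positivity) k

theorem galoisConnection_floor_mul_of_holderConjugate (hrs : r.HolderConjugate s) :
    GaloisConnection (fun k : ℕ => ⌊k * s⌋₊) (fun n : ℕ => n - ⌊((n : ℝ) + 1) * r⁻¹⌋₊) := by
  intro k n
  have hs := hrs.symm.pos
  have hx : 0 ≤ ((n : ℝ) + 1) * r⁻¹ := by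
    have := hrs.inv_nonneg
    positivity
  have hfloor : ⌊((n : ℝ) + 1) * r⁻¹⌋₊ ≤ n := by
    rw [Nat.floor_le_iff_lt_add_one hx]
    exact mul_lt_of_lt_one_right (by positivity) (inv_lt_one_of_one_lt₀ hrs.lt)
  calc ⌊k * s⌋₊ ≤ n ↔ (k : ℝ) * s < n + 1 := Nat.floor_le_iff_lt_add_one (by positivity) n
    _ ↔ (k : ℝ) < (n + 1) * s⁻¹ := by rw [← div_eq_mul_inv, lt_div_iff₀ hs]
    _ ↔ ((n : ℝ) + 1) * r⁻¹ + k < n + 1 := by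
      rw [← hrs.one_sub_inv]
      constructor <;> intro h <;> linarith
    _ ↔ ⌊((n : ℝ) + 1) * r⁻¹⌋₊ + k ≤ n := by
      rw [← Nat.floor_add_natCast hx, Nat.floor_le_iff_lt_add_one (by positivity)]
    _ ↔ k ≤ n - ⌊((n : ℝ) + 1) * r⁻¹⌋₊ := by omega

end Beatty

theorem GaloisConnection.l_succ_eq_of_u_succ {l u : ℕ → ℕ} (gc : GaloisConnection l u) {n : ℕ}
    (h : u (n + 1) = u n + 1) : l (u n + 1) = n + 1 := by
  have := gc (u n + 1) n
  have := gc (u n + 1) (n + 1)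
  omega

section SwapSum

variable {L U G W : ℕ → ℕ}

theorem swap_succ_add_mul_eq (hLG : GaloisConnection L G)
    (hUG : GaloisConnection U fun n => n - G n) (hUL : ∀ k, U k = L k + k)
    (hWL : ∀ k, 1 ≤ k → W (L k) = U k) (hWU : ∀ k, 1 ≤ k → W (U k) = L k) {n : ℕ}
    (hGn : G n ≤ n) (hG : G (n + 1) = G n ∨ G (n + 1) = G n + 1) :
    W (n + 1) + (n + 1) * G n = (n + 2) * G (n + 1) := by
  rcases hG with hflat | hjump
  · have hU : U (n - G n + 1) = n + 1 := hUG.l_succ_eq_of_u_succ (by omega)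
    have hW : W (n + 1) = G n := by
      have hW := hWU (n - G n + 1) le_add_self
      have hUL' := hUL (n - G n + 1)
      rw [hU] at hW hUL'
      omega
    rw [hW, hflat]
    ring
  · have hL : L (G n + 1) = n + 1 := hLG.l_succ_eq_of_u_succ hjump
    have hW : W (n + 1) = n + 1 + (G n + 1) := by
      rw [← hL, hWL _ le_add_self, hUL]
    rw [hW, hjump]
    ring

theorem sum_range_swap_eq_mul (hLG : GaloisConnection L G)
    (hUG : GaloisConnection U fun n => n - G n) (hUL : ∀ k, U k = L k + k)
    (hW0 : W 0 = 0) (hWL : ∀ k, 1 ≤ k → W (L k) = U k) (hWU : ∀ k, 1 ≤ k → W (U k) = L k)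
    (hG0 : G 0 = 0) (hG : ∀ n, G (n + 1) = G n ∨ G (n + 1) = G n + 1) (n : ℕ) :
    ∑ i ∈ range (n + 1), W i = (n + 1) * G n := by
  have hGle : ∀ n, G n ≤ n := fun n => by
    induction n with
    | zero => exact hG0.le
    | succ n ih => have := hG n; omega
  induction n with
  | zero => simp [hW0, hG0]
  | succ n ih =>
    rw [sum_range_succ, ih, add_comm]
    exact swap_succ_add_mul_eq hLG hUG hUL hWL hWU (hGle n) (hG n)

end SwapSum

theorem holderConjugate_goldenRatio_sq : goldenRatio.HolderConjugate (goldenRatio ^ 2) := by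
  refine holderConjugate_iff.2 ⟨one_lt_goldenRatio, ?_⟩
  rw [← inv_pow, inv_goldenRatio, neg_sq, goldenConj_sq]
  ring

/-- The averaged Wythoff swap sequence equals Hofstadter's G-sequence:
if `W` is the Wythoff swap sequence (`W(0) = 0`, `W(L(k)) = U(k)` and
`W(U(k)) = L(k)` for `k ≥ 1`, where `L, U` are the lower and upper Wythoff
sequences), then `W(0) + ⋯ + W(n) = (n+1)·⌊(n+1)γ⌋` for all `n ≥ 0`, i.e.,
the average of the first `n+1` terms of `W` is `G(n) = ⌊(n+1)γ⌋`. -/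
theorem averaged_wythoff_swap_eq_hofstadter_G
    (φ γ : ℝ) (hφ : φ = (1 + Real.sqrt 5) / 2) (hγ : γ = (Real.sqrt 5 - 1) / 2)
    (L U : ℕ → ℕ)
    (hL : ∀ n : ℕ, L n = ⌊(n : ℝ) * φ⌋₊)
    (hU : ∀ n : ℕ, U n = ⌊(n : ℝ) * φ ^ 2⌋₊)
    (W : ℕ → ℕ) (hW0 : W 0 = 0)
    (hWL : ∀ k : ℕ, 1 ≤ k → W (L k) = U k)
    (hWU : ∀ k : ℕ, 1 ≤ k → W (U k) = L k) :
    ∀ n : ℕ, ∑ i ∈ Finset.range (n + 1), W i = (n + 1) * ⌊((n : ℝ) + 1) * γ⌋₊ := by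
  have hφ' : φ = goldenRatio := hφ
  have hγφ : γ = φ⁻¹ := by rw [hγ, hφ', inv_goldenRatio]; ring
  subst hφ' hγφ
  have hLG := funext hL ▸ galoisConnection_floor_mul goldenRatio_pos goldenRatio_irrational
  have hUG := funext hU ▸
    galoisConnection_floor_mul_of_holderConjugate holderConjugate_goldenRatio_sq
  have hUL (k : ℕ) : U k = L k + k := by
    rw [hU, hL, goldenRatio_sq, mul_add, mul_one, Nat.floor_add_natCast (by positivity)]
  have hG0 : ⌊((0 : ℕ) + 1 : ℝ) * goldenRatio⁻¹⌋₊ = 0 :=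
    Nat.floor_eq_zero.2 (by simpa using inv_lt_one_of_one_lt₀ one_lt_goldenRatio)
  have hG := Nat.floor_succ_mul_eq_or (inv_nonneg.2 goldenRatio_pos.le)
    (inv_le_one_of_one_le₀ one_lt_goldenRatio.le)
  exact sum_range_swap_eq_mul hLG hUG hUL hW0 hWL hWU hG0 hG
end

section
/- Let γ = (√5−1)/2, G(n) = ⌊(n+1)γ⌋, L(n) = ⌊nφ⌋, U(n) = ⌊nφ²⌋ with φ = (1+√5)/2, and let W be the Wythoff swap sequence. Then for every M ≥ 1: G(U(M)) = L(M) = W(U(M)), and G(L(M)) = M = U(M) − L(M) = W(L(M)) − L(M). -/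
/-!
With `a = ⌊Mφ⌋` we have `a ≤ Mφ < a + 1`; dividing by `φ` traps `M` between `a/φ` and `(a+1)/φ`,
which gives `G(a) = ⌊(a+1)/φ⌋ = M` since `γ = 1/φ`. Because `φ² = φ + 1`, `U(M) = a + M`, and the
same two inequalities, rewritten with `1/φ = φ - 1`, show `⌊(a+M+1)/φ⌋ = a`. The statements about `W`
are its defining equations.
-/

open Real

theorem Nat.floor_div_of_floor_mul (M : ℕ) {α : ℝ} (hα : 1 < α) :
    ⌊((⌊(M : ℝ) * α⌋₊ : ℝ) + 1) / α⌋₊ = M := by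
  have hα₀ : 0 < α := by linarith
  have ha : (⌊(M : ℝ) * α⌋₊ : ℝ) ≤ M * α := Nat.floor_le (by positivity)
  have ha' : (M : ℝ) * α < ⌊(M : ℝ) * α⌋₊ + 1 := Nat.lt_floor_add_one _
  rw [Nat.floor_eq_iff (by positivity), le_div_iff₀ hα₀, div_lt_iff₀ hα₀]
  constructor <;> nlinarith

theorem floor_mul_goldenRatio_sq (M : ℕ) :
    ⌊(M : ℝ) * goldenRatio ^ 2⌋₊ = ⌊(M : ℝ) * goldenRatio⌋₊ + M := by
  rw [goldenRatio_sq, mul_add, mul_one,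
    Nat.floor_add_natCast (mul_nonneg M.cast_nonneg goldenRatio_pos.le)]

theorem floor_div_goldenRatio_of_floor_mul_add (M : ℕ) :
    ⌊(((⌊(M : ℝ) * goldenRatio⌋₊ + M : ℕ) : ℝ) + 1) / goldenRatio⌋₊ =
      ⌊(M : ℝ) * goldenRatio⌋₊ := by
  set a := ⌊(M : ℝ) * goldenRatio⌋₊
  have ha : (a : ℝ) ≤ M * goldenRatio := Nat.floor_le (by positivity)
  have ha' : (M : ℝ) * goldenRatio < a + 1 := Nat.lt_floor_add_one _
  have hφ := goldenRatio_sq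
  rw [Nat.floor_eq_iff (by positivity), le_div_iff₀ goldenRatio_pos,
    div_lt_iff₀ goldenRatio_pos]
  push_cast
  constructor <;> nlinarith [one_lt_goldenRatio]

theorem G_on_wythoff_values_general
    (φ γ : ℝ) (hφ : φ = (1 + Real.sqrt 5) / 2) (hγ : γ = (Real.sqrt 5 - 1) / 2)
    (G : ℕ → ℕ) (hG : ∀ n : ℕ, G n = ⌊((n : ℝ) + 1) * γ⌋₊)
    (L U : ℕ → ℕ)
    (hL : ∀ n : ℕ, L n = ⌊(n : ℝ) * φ⌋₊)
    (hU : ∀ n : ℕ, U n = ⌊(n : ℝ) * φ ^ 2⌋₊)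
    (W : ℕ → ℕ)
    (hWL : ∀ k : ℕ, 1 ≤ k → W (L k) = U k)
    (hWU : ∀ k : ℕ, 1 ≤ k → W (U k) = L k) :
    ∀ M : ℕ, 1 ≤ M →
      (G (U M) = L M ∧ L M = W (U M)) ∧
      (G (L M) = M ∧ M = U M - L M ∧ U M - L M = W (L M) - L M) := by
  intro M hM
  obtain rfl : φ = goldenRatio := hφ
  have hγ : γ = goldenRatio⁻¹ := by rw [hγ, inv_goldenRatio, goldenConj]; ring
  have hG' (n : ℕ) : G n = ⌊((n : ℝ) + 1) / goldenRatio⌋₊ := by rw [hG, hγ, div_eq_mul_inv]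
  have hUL : U M = L M + M := by rw [hU, hL, floor_mul_goldenRatio_sq]
  have hGL : G (L M) = M := by rw [hG', hL, Nat.floor_div_of_floor_mul M one_lt_goldenRatio]
  have hGU : G (U M) = L M := by rw [hG', hUL, hL, floor_div_goldenRatio_of_floor_mul_add]
  exact ⟨⟨hGU, (hWU M hM).symm⟩, hGL, by omega, by rw [hWL M hM]⟩

/-- For Hofstadter's G-sequence `G(n) = ⌊(n+1)γ⌋`, the Wythoff sequences
`L, U`, and the Wythoff swap sequence `W`, one has for all `M ≥ 1`:
`G(U(M)) = L(M) = W(U(M))` and `G(L(M)) = M = U(M) − L(M) = W(L(M)) − L(M)`. -/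
theorem G_on_wythoff_values
    (φ γ : ℝ) (hφ : φ = (1 + Real.sqrt 5) / 2) (hγ : γ = (Real.sqrt 5 - 1) / 2)
    (G : ℕ → ℕ) (hG : ∀ n : ℕ, G n = ⌊((n : ℝ) + 1) * γ⌋₊)
    (L U : ℕ → ℕ)
    (hL : ∀ n : ℕ, L n = ⌊(n : ℝ) * φ⌋₊)
    (hU : ∀ n : ℕ, U n = ⌊(n : ℝ) * φ ^ 2⌋₊)
    (W : ℕ → ℕ) (hW0 : W 0 = 0)
    (hWL : ∀ k : ℕ, 1 ≤ k → W (L k) = U k)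
    (hWU : ∀ k : ℕ, 1 ≤ k → W (U k) = L k) :
    ∀ M : ℕ, 1 ≤ M →
      (G (U M) = L M ∧ L M = W (U M)) ∧
      (G (L M) = M ∧ M = U M - L M ∧ U M - L M = W (L M) - L M) :=
  G_on_wythoff_values_general φ γ hφ hγ G hG L U hL hU W hWL hWU
end

section
/- Let φ = (1+√5)/2, γ = 1/φ, L(n) = ⌊nφ⌋, U(n) = ⌊nφ²⌋, and let W be the Wythoff swap sequence. Then for all n ≥ 1, W(U(n)) = ⌊γ·U(n)⌋ and W(L(n)) = ⌊φ·L(n)⌋ + 1; equivalently, ⌊nφ⌋ = ⌊γ⌊nφ²⌋⌋ and ⌊nφ²⌋ = ⌊φ⌊nφ⌋⌋ + 1 for all n ≥ 1. -/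
/-!
Write `a = ⌊nφ⌋` and use `φ² = φ + 1`, so that `⌊nφ²⌋ = a + n`. Multiplying the bounds
`a < nφ < a + 1` (strict on the left because `φ` is irrational) by `φ - 1 = φ⁻¹` gives
`a ≤ φ⁻¹ (a + n) < a + 1` and `a + n ≤ φ a + 1 < a + n + 1`, which are the two floor identities.
-/

namespace Real

open goldenRatio

theorem inv_goldenRatio_eq_goldenRatio_sub_one : φ⁻¹ = φ - 1 := by
  rw [inv_goldenRatio, ← one_sub_goldenConj]
  ring

theorem floor_natCast_mul_goldenRatio_sq (n : ℕ) : ⌊(n : ℝ) * φ ^ 2⌋₊ = ⌊(n : ℝ) * φ⌋₊ + n := by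
  rw [goldenRatio_sq, mul_add, mul_one, Nat.floor_add_natCast (by positivity)]

theorem floor_natCast_mul_goldenRatio_lt {n : ℕ} (hn : n ≠ 0) :
    (⌊(n : ℝ) * φ⌋₊ : ℝ) < n * φ :=
  (Nat.floor_le (by positivity)).lt_of_ne ((goldenRatio_irrational.natCast_mul hn).ne_nat _).symm

theorem floor_inv_goldenRatio_mul_floor_natCast_mul_goldenRatio_sq (n : ℕ) :
    ⌊φ⁻¹ * (⌊(n : ℝ) * φ ^ 2⌋₊ : ℝ)⌋₊ = ⌊(n : ℝ) * φ⌋₊ := by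
  have h_floor_le : (⌊(n : ℝ) * φ⌋₊ : ℝ) ≤ n * φ := Nat.floor_le (by positivity)
  have h_lt_floor_add_one : (n : ℝ) * φ < ⌊(n : ℝ) * φ⌋₊ + 1 := Nat.lt_floor_add_one _
  rw [Nat.floor_eq_iff (by positivity), floor_natCast_mul_goldenRatio_sq,
    inv_goldenRatio_eq_goldenRatio_sub_one]
  constructor <;> push_cast <;> nlinarith [goldenRatio_sq, one_lt_goldenRatio]

theorem floor_goldenRatio_mul_floor_natCast_mul_goldenRatio_add_one {n : ℕ} (hn : n ≠ 0) :
    ⌊φ * (⌊(n : ℝ) * φ⌋₊ : ℝ)⌋₊ + 1 = ⌊(n : ℝ) * φ ^ 2⌋₊ := by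
  have h_floor_lt := floor_natCast_mul_goldenRatio_lt hn
  have h_lt_floor_add_one : (n : ℝ) * φ < ⌊(n : ℝ) * φ⌋₊ + 1 := Nat.lt_floor_add_one _
  rw [← Nat.floor_add_one (by positivity), Nat.floor_eq_iff (by positivity),
    floor_natCast_mul_goldenRatio_sq]
  constructor <;> push_cast <;> nlinarith [goldenRatio_sq, one_lt_goldenRatio, goldenRatio_lt_two]

end Real

open Real in
theorem wythoff_swap_scatterplot_lines_general
    (φ γ : ℝ) (hφ : φ = (1 + Real.sqrt 5) / 2) (hγ : γ = 1 / φ)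
    (L U : ℕ → ℕ)
    (hL : ∀ n : ℕ, L n = ⌊(n : ℝ) * φ⌋₊)
    (hU : ∀ n : ℕ, U n = ⌊(n : ℝ) * φ ^ 2⌋₊)
    (W : ℕ → ℕ)
    (hWL : ∀ k : ℕ, 1 ≤ k → W (L k) = U k)
    (hWU : ∀ k : ℕ, 1 ≤ k → W (U k) = L k) :
    ∀ n : ℕ, 1 ≤ n →
      (W (U n) = ⌊γ * (U n : ℝ)⌋₊ ∧ W (L n) = ⌊φ * (L n : ℝ)⌋₊ + 1) ∧
      (⌊(n : ℝ) * φ⌋₊ = ⌊γ * (⌊(n : ℝ) * φ ^ 2⌋₊ : ℝ)⌋₊ ∧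
       ⌊(n : ℝ) * φ ^ 2⌋₊ = ⌊φ * (⌊(n : ℝ) * φ⌋₊ : ℝ)⌋₊ + 1) := by
  intro n hn
  have hφ_gold : φ = goldenRatio := hφ
  subst hφ_gold hγ
  rw [one_div]
  have h_lower_line := floor_inv_goldenRatio_mul_floor_natCast_mul_goldenRatio_sq n
  have h_upper_line := floor_goldenRatio_mul_floor_natCast_mul_goldenRatio_add_one (n := n) (by omega)
  refine ⟨⟨?_, ?_⟩, h_lower_line.symm, h_upper_line.symm⟩
  · rw [hWU n hn, hL, hU, h_lower_line]
  · rw [hWL n hn, hU, hL, h_upper_line]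

/-- The two lines of the scatterplot of the Wythoff swap sequence `W`:
for all `n ≥ 1`, `W(U(n)) = ⌊γ·U(n)⌋` and `W(L(n)) = ⌊φ·L(n)⌋ + 1`;
equivalently, `⌊nφ⌋ = ⌊γ⌊nφ²⌋⌋` and `⌊nφ²⌋ = ⌊φ⌊nφ⌋⌋ + 1`. -/
theorem wythoff_swap_scatterplot_lines
    (φ γ : ℝ) (hφ : φ = (1 + Real.sqrt 5) / 2) (hγ : γ = 1 / φ)
    (L U : ℕ → ℕ)
    (hL : ∀ n : ℕ, L n = ⌊(n : ℝ) * φ⌋₊)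
    (hU : ∀ n : ℕ, U n = ⌊(n : ℝ) * φ ^ 2⌋₊)
    (W : ℕ → ℕ) (hW0 : W 0 = 0)
    (hWL : ∀ k : ℕ, 1 ≤ k → W (L k) = U k)
    (hWU : ∀ k : ℕ, 1 ≤ k → W (U k) = L k) :
    ∀ n : ℕ, 1 ≤ n →
      (W (U n) = ⌊γ * (U n : ℝ)⌋₊ ∧ W (L n) = ⌊φ * (L n : ℝ)⌋₊ + 1) ∧
      (⌊(n : ℝ) * φ⌋₊ = ⌊γ * (⌊(n : ℝ) * φ ^ 2⌋₊ : ℝ)⌋₊ ∧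
       ⌊(n : ℝ) * φ ^ 2⌋₊ = ⌊φ * (⌊(n : ℝ) * φ⌋₊ : ℝ)⌋₊ + 1) :=
  wythoff_swap_scatterplot_lines_general φ γ hφ hγ L U hL hU W hWL hWU
end

section
/- Let k ≥ 1 and let γ = (√(k²+4) − k)/2 (the value of the continued fraction [0; k, k, k, …]). Suppose H : ℕ → ℕ satisfies H(n) = 0 for 0 ≤ n < k and, for all n ≥ k, H(n) + H(n−1) + ⋯ + H(n−k+1) + H(H(n−k)) = n − k + 1. Then H(n) = ⌊γ(n+1)⌋ for all n ≥ 1. -/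
/-!
If `γ > 0` is irrational with `γ (γ + k) = 1`, i.e. `1 / γ = γ + k`, then for every `m`
`∑_{m < p ≤ m + k} ⌊γ p⌋ + ⌊γ (⌊γ m⌋ + 1)⌋ = m`. Indeed, with `f = ⌊γ m⌋` and `N = ⌊(f + 1) / γ⌋`,
each term of the sum is `f` or `f + 1`, the latter exactly when `p > N`, while
`⌊γ (f + 1)⌋ + k (f + 1) = ⌊(f + 1)(γ + k)⌋ = N`. Shifting indices, `n ↦ ⌊γ (n + 1)⌋` satisfies the
recurrence; since it is bounded by `n`, strong induction shows that the recurrence has no other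
solution.
-/

open Finset

theorem Finset.sum_Ioc_sub_eq_add_sum_Icc {M : Type*} [AddCommMonoid M] (g : ℕ → M) {k n : ℕ}
    (hk : 1 ≤ k) (hkn : k ≤ n + 1) :
    ∑ p ∈ Ioc (n + 1 - k) (n + 1), g p = g (n + 1) + ∑ i ∈ Icc 1 (k - 1), g (n + 1 - i) := by
  rw [sum_Ioc_succ_top (by omega), add_comm]
  congr 1
  refine sum_nbij' (n + 1 - ·) (n + 1 - ·) ?_ ?_ ?_ ?_ ?_ <;>
    simp only [mem_Ioc, mem_Icc] <;> intros <;> first | omega | congr 1; omega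

theorem le_floor_mul_iff_floor_div_lt {γ : ℝ} (hγ : 0 < γ) (hirr : Irrational γ) {a : ℕ}
    (ha : a ≠ 0) (p : ℕ) : a ≤ ⌊γ * p⌋₊ ↔ ⌊a / γ⌋₊ < p := by
  have hne : (a : ℝ) ≠ γ * p := by
    rcases eq_or_ne p 0 with rfl | hp
    · simpa using ha
    · exact ((hirr.mul_natCast hp).ne_nat a).symm
  rw [Nat.le_floor_iff (by positivity), Nat.floor_lt (by positivity), div_lt_iff₀ hγ, mul_comm γ,
    le_iff_lt_or_eq, or_iff_left (by rwa [mul_comm])]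

section

variable {k : ℕ} {γ : ℝ} (hγ : 0 < γ) (hγk : γ * (γ + k) = 1)
include hγ hγk

theorem div_eq_mul_add_of_mul_add_eq_one (x : ℝ) : x / γ = x * (γ + k) := by
  rw [div_eq_iff hγ.ne']
  linear_combination (-x) * hγk

theorem mul_natCast_lt_one_of_mul_add_eq_one : γ * k < 1 := by
  nlinarith

theorem lt_one_of_mul_add_eq_one (hirr : Irrational γ) : γ < 1 :=
  lt_of_le_of_ne (by nlinarith) hirr.ne_one

theorem sum_Ioc_floor_mul_add_floor_mul_floor_add_one (hirr : Irrational γ) (m : ℕ) :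
    ∑ p ∈ Ioc m (m + k), ⌊γ * p⌋₊ + ⌊γ * (⌊γ * m⌋₊ + 1)⌋₊ = m := by
  set f := ⌊γ * m⌋₊
  set N := ⌊((f + 1 : ℕ) : ℝ) / γ⌋₊
  have hcut : ∀ p : ℕ, f + 1 ≤ ⌊γ * p⌋₊ ↔ N < p :=
    le_floor_mul_iff_floor_div_lt hγ hirr f.succ_ne_zero
  have hmN : m ≤ N := not_lt.1 fun h => by have := (hcut m).2 h; omega
  have hγk1 := mul_natCast_lt_one_of_mul_add_eq_one hγ hγk
  have hγ1 : γ < 1 := lt_one_of_mul_add_eq_one hγ hγk hirr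
  have hNk : N ≤ m + k := by
    rw [← Nat.lt_succ_iff, Nat.floor_lt (by positivity), div_eq_mul_add_of_mul_add_eq_one hγ hγk]
    have hf : (f : ℝ) ≤ γ * m := Nat.floor_le (by positivity)
    calc ((f + 1 : ℕ) : ℝ) * (γ + k) ≤ (γ * m + 1) * (γ + k) := by push_cast; gcongr
      _ = m + γ + k := by linear_combination (m : ℝ) * hγk
      _ < _ := by push_cast; linarith
  have hterm : ∀ p ∈ Ioc m (m + k), ⌊γ * p⌋₊ = f + if N < p then 1 else 0 := by
    intro p hp
    rw [mem_Ioc] at hp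
    have hlow : f ≤ ⌊γ * p⌋₊ := Nat.floor_mono (by gcongr; omega)
    have hup : ⌊γ * p⌋₊ < f + 2 := by
      rw [Nat.floor_lt' (by omega)]
      have hf : γ * m < f + 1 := Nat.lt_floor_add_one _
      calc γ * p ≤ γ * m + γ * k := by rw [← mul_add]; gcongr; exact_mod_cast hp.2
        _ < _ := by push_cast; linarith
    have := hcut p
    split_ifs <;> omega
  have hfilter : (Ioc m (m + k)).filter (N < ·) = Ioc N (m + k) := by
    ext p
    simp only [mem_filter, mem_Ioc]
    omega
  have hsum : ∑ p ∈ Ioc m (m + k), ⌊γ * p⌋₊ = k * f + (m + k - N) := by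
    rw [sum_congr rfl hterm, sum_add_distrib, sum_const, sum_boole, hfilter, Nat.card_Ioc,
      Nat.card_Ioc, Nat.cast_id, smul_eq_mul, add_tsub_cancel_left, mul_comm]
  have htop : ⌊γ * (f + 1)⌋₊ + k * (f + 1) = N := by
    rw [← Nat.floor_add_natCast (by positivity)]
    simp only [N, div_eq_mul_add_of_mul_add_eq_one hγ hγk]
    congr 1
    push_cast
    ring
  rw [Nat.mul_succ] at htop
  omega

end

noncomputable def slowBeatty (γ : ℝ) (n : ℕ) : ℕ := ⌊γ * ((n : ℝ) + 1)⌋₊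

theorem slowBeatty_le {γ : ℝ} (hγ : γ < 1) (n : ℕ) : slowBeatty γ n ≤ n := by
  rw [slowBeatty, ← Nat.lt_succ_iff, Nat.floor_lt' n.succ_ne_zero]
  push_cast
  nlinarith

structure IsCelayaRuskeySolution (k : ℕ) (H : ℕ → ℕ) : Prop where
  eq_zero_of_lt : ∀ n : ℕ, n < k → H n = 0
  recurrence : ∀ n : ℕ, k ≤ n →
    H n + (∑ i ∈ Icc 1 (k - 1), H (n - i)) + H (H (n - k)) = n - k + 1

theorem IsCelayaRuskeySolution.eq_of_le {k : ℕ} {H G : ℕ → ℕ} (hk : 1 ≤ k)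
    (hH : IsCelayaRuskeySolution k H) (hG : IsCelayaRuskeySolution k G) (hG_le : ∀ n, G n ≤ n) :
    H = G := by
  funext n
  induction n using Nat.strong_induction_on with
  | _ n ih =>
    rcases lt_or_ge n k with hn | hn
    · rw [hH.eq_zero_of_lt n hn, hG.eq_zero_of_lt n hn]
    have hsum : ∑ i ∈ Icc 1 (k - 1), H (n - i) = ∑ i ∈ Icc 1 (k - 1), G (n - i) :=
      sum_congr rfl fun i hi => ih _ (by rw [mem_Icc] at hi; omega)
    have hnk : H (n - k) = G (n - k) := ih _ (by omega)
    have hHH : H (H (n - k)) = G (G (n - k)) := by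
      rw [hnk]
      exact ih _ (by have := hG_le (n - k); omega)
    have := hH.recurrence n hn
    have := hG.recurrence n hn
    omega

theorem isCelayaRuskeySolution_slowBeatty {k : ℕ} {γ : ℝ} (hk : 1 ≤ k) (hγ : 0 < γ)
    (hγk : γ * (γ + k) = 1) (hirr : Irrational γ) : IsCelayaRuskeySolution k (slowBeatty γ) where
  eq_zero_of_lt n hn := by
    rw [slowBeatty, Nat.floor_eq_zero]
    have : (n : ℝ) + 1 ≤ k := by exact_mod_cast hn
    nlinarith [mul_natCast_lt_one_of_mul_add_eq_one hγ hγk]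
  recurrence n hn := by
    have key := sum_Ioc_floor_mul_add_floor_mul_floor_add_one hγ hγk hirr (n + 1 - k)
    rw [show n + 1 - k + k = n + 1 by omega, sum_Ioc_sub_eq_add_sum_Icc _ hk (by omega)] at key
    have hshift : ∀ i ≤ n, slowBeatty γ (n - i) = ⌊γ * ((n + 1 - i : ℕ) : ℝ)⌋₊ := fun i hi => by
      rw [slowBeatty, Nat.sub_add_comm hi, Nat.cast_add_one]
    have htop : slowBeatty γ n = ⌊γ * ((n + 1 : ℕ) : ℝ)⌋₊ := by rw [slowBeatty, Nat.cast_add_one]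
    rw [← hshift k hn, ← htop,
      ← sum_congr rfl fun i hi => hshift i (by rw [mem_Icc] at hi; omega)] at key
    rw [show n - k + 1 = n + 1 - k by omega]
    exact key

theorem sqrt_sq_add_four_sub_div_two_pos (x : ℝ) : 0 < (√(x ^ 2 + 4) - x) / 2 := by
  have := Real.sq_sqrt (show 0 ≤ x ^ 2 + 4 by positivity)
  nlinarith [Real.sqrt_nonneg (x ^ 2 + 4)]

theorem sqrt_sq_add_four_sub_div_two_mul_add (x : ℝ) :
    (√(x ^ 2 + 4) - x) / 2 * ((√(x ^ 2 + 4) - x) / 2 + x) = 1 := by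
  linear_combination Real.sq_sqrt (show 0 ≤ x ^ 2 + 4 by positivity) / 4

theorem irrational_sqrt_natCast_sq_add_four {k : ℕ} (hk : 1 ≤ k) :
    Irrational √((k : ℝ) ^ 2 + 4) := by
  have hsq : ¬IsSquare (k ^ 2 + 4) := by
    rintro ⟨a, ha⟩
    have hka : k < a := by nlinarith
    have hak : a < k + 2 := by nlinarith
    obtain rfl : a = k + 1 := by omega
    ring_nf at ha
    omega
  exact_mod_cast irrational_sqrt_natCast_iff.mpr hsq

/-- Celaya–Ruskey: for `k ≥ 1` and `γ = (√(k²+4) − k)/2 = [0; k, k, k, …]`,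
if `H(n) = 0` for `n < k` and
`H(n) + H(n−1) + ⋯ + H(n−k+1) + H(H(n−k)) = n − k + 1` for all `n ≥ k`,
then `H(n) = ⌊γ(n+1)⌋` for all `n ≥ 1`. -/
theorem celaya_ruskey
    (k : ℕ) (hk : 1 ≤ k)
    (γ : ℝ) (hγ : γ = (Real.sqrt ((k : ℝ) ^ 2 + 4) - k) / 2)
    (H : ℕ → ℕ)
    (H0 : ∀ n : ℕ, n < k → H n = 0)
    (Hrec : ∀ n : ℕ, k ≤ n →
      H n + (∑ i ∈ Finset.Icc 1 (k - 1), H (n - i)) + H (H (n - k)) = n - k + 1) :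
    ∀ n : ℕ, 1 ≤ n → H n = ⌊γ * ((n : ℝ) + 1)⌋₊ := by
  have hγ0 : 0 < γ := hγ ▸ sqrt_sq_add_four_sub_div_two_pos k
  have hγk : γ * (γ + k) = 1 := hγ ▸ sqrt_sq_add_four_sub_div_two_mul_add k
  have hirr : Irrational γ := by
    simpa [hγ] using ((irrational_sqrt_natCast_sq_add_four hk).sub_natCast k).div_natCast
      two_ne_zero
  have hH_eq : H = slowBeatty γ :=
    IsCelayaRuskeySolution.eq_of_le hk ⟨H0, Hrec⟩
      (isCelayaRuskeySolution_slowBeatty hk hγ0 hγk hirr)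
      (slowBeatty_le (lt_one_of_mul_add_eq_one hγ0 hγk hirr))
  intro n _
  exact congrFun hH_eq n
end

section
/- Let H : ℕ → ℕ satisfy H(0) = H(1) = 0 and, for all n ≥ 2, H(n) + H(n−1) + H(H(n−2)) = n − 1. Then H(n) = ⌊(√2 − 1)(n+1)⌋ for all n ≥ 0. -/
/-!
Write `γ * m = a + t` with `a = ⌊γ * m⌋` and `t` its fractional part. Since `γ² = 1 - 2γ`,
`γ * (a + 1) = (m - 2a) + (γ - (2 + γ) * t)`, so the three floors in the recursion sum to `m`
plus a correction depending only on `t`. That correction is piecewise constant, with breakpoints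
`1 - 2γ` and `1 - γ`, and vanishes on each piece; irrationality of `γ` keeps `t` off the
breakpoints. Hence `n ↦ ⌊γ * (n + 1)⌋` solves the recursion, and a solution is determined by
its two initial values.
-/

local notation "γ" => Real.sqrt 2 - 1

lemma sqrt_two_sub_one_pos : 0 < γ := by
  have := Real.one_lt_sqrt_two; linarith

lemma sqrt_two_sub_one_lt_half : γ < 1 / 2 := by
  nlinarith [Real.mul_self_sqrt (show (0 : ℝ) ≤ 2 by norm_num), Real.sqrt_nonneg 2]

lemma sqrt_two_sub_one_mul_self : γ * γ = 1 - 2 * γ := by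
  nlinarith [Real.mul_self_sqrt (show (0 : ℝ) ≤ 2 by norm_num)]

lemma irrational_sqrt_two_sub_one : Irrational γ := by
  simpa using irrational_sqrt_two.sub_intCast 1

lemma floor_add_floor_add_floor_sub_eq_zero {t : ℝ} (ht0 : 0 ≤ t) (ht1 : t < 1)
    (hne₁ : t ≠ 1 - 2 * γ) (hne₂ : t ≠ 1 - γ) :
    ⌊t + γ⌋ + ⌊t + 2 * γ⌋ + ⌊γ - (2 + γ) * t⌋ = 0 := by
  have hpos := sqrt_two_sub_one_pos
  have hhalf := sqrt_two_sub_one_lt_half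
  -- via `γ² = 1 - 2γ`, `γ - (2 + γ) * t` equals `0` at `t = 1 - 2γ` and `-1` at `t = 1 - γ`
  have hsq := sqrt_two_sub_one_mul_self
  have h2γ : (0 : ℝ) < 2 + γ := by linarith
  rcases hne₁.lt_or_gt with h₁ | h₁
  · have f₁ : ⌊t + γ⌋ = 0 := by rw [Int.floor_eq_iff]; constructor <;> push_cast <;> linarith
    have f₂ : ⌊t + 2 * γ⌋ = 0 := by rw [Int.floor_eq_iff]; constructor <;> push_cast <;> linarith
    have f₃ : ⌊γ - (2 + γ) * t⌋ = 0 := by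
      rw [Int.floor_eq_iff]; constructor <;> push_cast <;>
        nlinarith [mul_lt_mul_of_pos_right h₁ h2γ, mul_nonneg ht0 h2γ.le]
    rw [f₁, f₂, f₃]; rfl
  rcases hne₂.lt_or_gt with h₂ | h₂
  · have f₁ : ⌊t + γ⌋ = 0 := by rw [Int.floor_eq_iff]; constructor <;> push_cast <;> linarith
    have f₂ : ⌊t + 2 * γ⌋ = 1 := by rw [Int.floor_eq_iff]; constructor <;> push_cast <;> linarith
    have f₃ : ⌊γ - (2 + γ) * t⌋ = -1 := by
      rw [Int.floor_eq_iff]; constructor <;> push_cast <;>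
        nlinarith [mul_lt_mul_of_pos_right h₁ h2γ, mul_lt_mul_of_pos_right h₂ h2γ]
    rw [f₁, f₂, f₃]; rfl
  · have f₁ : ⌊t + γ⌋ = 1 := by rw [Int.floor_eq_iff]; constructor <;> push_cast <;> linarith
    have f₂ : ⌊t + 2 * γ⌋ = 1 := by rw [Int.floor_eq_iff]; constructor <;> push_cast <;> linarith
    have f₃ : ⌊γ - (2 + γ) * t⌋ = -2 := by
      rw [Int.floor_eq_iff]; constructor <;> push_cast <;>
        nlinarith [mul_lt_mul_of_pos_right h₂ h2γ, mul_lt_mul_of_pos_right ht1 h2γ]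
    rw [f₁, f₂, f₃]; rfl

lemma floor_add_floor_add_floor_floor_eq (m : ℕ) :
    ⌊γ * (m + 2)⌋ + ⌊γ * (m + 1)⌋ + ⌊γ * (⌊γ * m⌋ + 1)⌋ = m := by
  set a := ⌊γ * m⌋
  set t := Int.fract (γ * m)
  have hat : γ * m = a + t := (Int.floor_add_fract _).symm
  have hne (j : ℕ) (hj : j ≠ 0) : t ≠ 1 - j * γ := by
    intro h
    refine (irrational_sqrt_two_sub_one.mul_natCast (m := m + j) (by omega)).ne_int (a + 1) ?_
    push_cast
    linear_combination hat + h
  have e₂ : γ * (m + 2) = a + (t + 2 * γ) := by linear_combination hat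
  have e₁ : γ * (m + 1) = a + (t + γ) := by linear_combination hat
  have e₀ : γ * (a + 1) = ((m - 2 * a : ℤ) : ℝ) + (γ - (2 + γ) * t) := by
    push_cast
    linear_combination (-γ - 2) * hat + m * sqrt_two_sub_one_mul_self
  rw [e₂, e₁, e₀, Int.floor_intCast_add, Int.floor_intCast_add, Int.floor_intCast_add]
  have hcorr := floor_add_floor_add_floor_sub_eq_zero (Int.fract_nonneg _) (Int.fract_lt_one _)
    (by simpa using hne 2 two_ne_zero) (by simpa using hne 1 one_ne_zero)
  linear_combination hcorr

noncomputable def pellFloor (n : ℕ) : ℕ := ⌊γ * (n + 1)⌋₊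

lemma natCast_pellFloor (n : ℕ) : (pellFloor n : ℤ) = ⌊γ * (n + 1)⌋ :=
  Int.natCast_floor_eq_floor (by have := sqrt_two_sub_one_pos; positivity)

lemma pellFloor_le (n : ℕ) : pellFloor n ≤ n := by
  rw [pellFloor, ← Nat.lt_succ_iff, Nat.floor_lt (by have := sqrt_two_sub_one_pos; positivity)]
  push_cast
  nlinarith [sqrt_two_sub_one_lt_half, Nat.cast_nonneg (α := ℝ) n]

lemma pellFloor_zero : pellFloor 0 = 0 := by
  rw [pellFloor, Nat.floor_eq_zero]
  push_cast
  linarith [sqrt_two_sub_one_lt_half]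

lemma pellFloor_one : pellFloor 1 = 0 := by
  rw [pellFloor, Nat.floor_eq_zero]
  push_cast
  linarith [sqrt_two_sub_one_lt_half]

lemma pellFloor_add_two (k : ℕ) :
    pellFloor (k + 2) + pellFloor (k + 1) + pellFloor (pellFloor k) = k + 1 := by
  have h := floor_add_floor_add_floor_floor_eq (k + 1)
  have hk : (pellFloor k : ℝ) = ⌊γ * (k + 1)⌋ := by exact_mod_cast natCast_pellFloor k
  zify
  rw [natCast_pellFloor, natCast_pellFloor, natCast_pellFloor, hk]
  push_cast at h ⊢
  rwa [show (k : ℝ) + 2 + 1 = k + 1 + 2 by ring]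

lemma eq_of_hofstadter_pell_rec {H F : ℕ → ℕ} (h0 : H 0 = F 0) (h1 : H 1 = F 1)
    (hH : ∀ k, H (k + 2) + H (k + 1) + H (H k) = k + 1)
    (hF : ∀ k, F (k + 2) + F (k + 1) + F (F k) = k + 1) (hF_le : ∀ n, F n ≤ n) :
    H = F := by
  funext n
  induction n using Nat.strong_induction_on with
  | _ n ih =>
    match n with
    | 0 => exact h0
    | 1 => exact h1
    | k + 2 =>
      have e₁ : H (k + 1) = F (k + 1) := ih (k + 1) (by omega)
      have e₀ : H k = F k := ih k (by omega)
      have e : H (H k) = F (F k) := by rw [e₀]; exact ih (F k) (by have := hF_le k; omega)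
      have := hH k
      have := hF k
      omega

/-- The Hofstadter Pell sequence: if `H(0) = H(1) = 0` and
`H(n) + H(n−1) + H(H(n−2)) = n − 1` for all `n ≥ 2`, then
`H(n) = ⌊(√2 − 1)(n+1)⌋` for all `n ≥ 0`. -/
theorem hofstadter_pell
    (H : ℕ → ℕ) (h0 : H 0 = 0) (h1 : H 1 = 0)
    (hrec : ∀ n : ℕ, 2 ≤ n → H n + H (n - 1) + H (H (n - 2)) = n - 1) :
    ∀ n : ℕ, H n = ⌊(Real.sqrt 2 - 1) * ((n : ℝ) + 1)⌋₊ := by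
  have hH (k : ℕ) : H (k + 2) + H (k + 1) + H (H k) = k + 1 := by
    simpa using hrec (k + 2) (by omega)
  have hpell : H = pellFloor :=
    eq_of_hofstadter_pell_rec (h0.trans pellFloor_zero.symm) (h1.trans pellFloor_one.symm)
      hH pellFloor_add_two pellFloor_le
  exact congrFun hpell
end

section
/- Let H(n) = ⌊(√2 − 1)(n+1)⌋, L^P(n) = ⌊n(1+√2)⌋ and U^P(n) = ⌊n(1 + √2/2)⌋. Then for all n ≥ 1, H(L^P(n)) = n and H(U^P(n)) = ⌊n·√2/2⌋. -/
/-!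
Write `α = 1 + √2` and `β = 1 + √2/2`, so that `α⁻¹ = 1 - β⁻¹ = √2 - 1`. For every real `α > 1`,
`x ↦ ⌊α⁻¹ (x + 1)⌋` undoes `n ↦ ⌊n α⌋`, because `α⁻¹ (⌊n α⌋ + 1)` lies in `[n, n + α⁻¹)`.
For every real `β > 1` one has `⌊n β⌋ = n + k` with `k = ⌊n (β - 1)⌋`, and multiplying by `β`
shows that `(1 - β⁻¹) (n + k + 1)` lies in `[k, k + 1)`. Neither step needs irrationality.
-/

open Real

theorem floor_inv_mul_floor_mul_add_one {α : ℝ} (hα : 1 < α) (n : ℕ) :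
    ⌊α⁻¹ * (⌊n * α⌋₊ + 1)⌋₊ = n := by
  have hα0 : 0 < α := by linarith
  have hle : (⌊n * α⌋₊ : ℝ) ≤ n * α := Nat.floor_le (by positivity)
  have hlt : n * α < ⌊n * α⌋₊ + 1 := Nat.lt_floor_add_one _
  rw [inv_mul_eq_div, Nat.floor_eq_iff (by positivity), le_div_iff₀ hα0, div_lt_iff₀ hα0]
  constructor <;> nlinarith

theorem floor_one_sub_inv_mul_floor_mul_add_one {β : ℝ} (hβ : 1 < β) (n : ℕ) :
    ⌊(1 - β⁻¹) * (⌊n * β⌋₊ + 1)⌋₊ = ⌊n * (β - 1)⌋₊ := by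
  have hβ0 : 0 < β := by linarith
  have hβ1 : 0 < β - 1 := by linarith
  set k := ⌊n * (β - 1)⌋₊ with hk
  have hle : (k : ℝ) ≤ n * (β - 1) := Nat.floor_le (by positivity)
  have hlt : n * (β - 1) < k + 1 := Nat.lt_floor_add_one _
  have hsplit : ⌊n * β⌋₊ = k + n := by
    rw [hk, ← Nat.floor_add_natCast (by positivity)]
    congr 1
    ring
  have hcoeff : 1 - β⁻¹ = (β - 1) / β := by field_simp
  rw [hsplit, hcoeff, div_mul_eq_mul_div, Nat.floor_eq_iff (by positivity),
    le_div_iff₀ hβ0, div_lt_iff₀ hβ0]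
  push_cast
  constructor <;> nlinarith

theorem inv_one_add_sqrt_two : (1 + √2)⁻¹ = √2 - 1 := by
  have h : √2 * √2 = 2 := mul_self_sqrt zero_le_two
  exact inv_eq_of_mul_eq_one_right (by nlinarith)

theorem one_sub_inv_one_add_sqrt_two_div_two : 1 - (1 + √2 / 2)⁻¹ = √2 - 1 := by
  have h : √2 * √2 = 2 := mul_self_sqrt zero_le_two
  field_simp
  nlinarith

/-- The Hofstadter Pell sequence `H(n) = ⌊(√2 − 1)(n+1)⌋` on the Beatty pair
`L^P(n) = ⌊n(1+√2)⌋`, `U^P(n) = ⌊n(1+√2/2)⌋`: for all `n ≥ 1`,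
`H(L^P(n)) = n` and `H(U^P(n)) = ⌊n·√2/2⌋`. -/
theorem hofstadter_pell_on_beatty_pair
    (H LP UP : ℕ → ℕ)
    (hH : ∀ n : ℕ, H n = ⌊(Real.sqrt 2 - 1) * ((n : ℝ) + 1)⌋₊)
    (hLP : ∀ n : ℕ, LP n = ⌊(n : ℝ) * (1 + Real.sqrt 2)⌋₊)
    (hUP : ∀ n : ℕ, UP n = ⌊(n : ℝ) * (1 + Real.sqrt 2 / 2)⌋₊) :
    ∀ n : ℕ, 1 ≤ n → H (LP n) = n ∧ H (UP n) = ⌊(n : ℝ) * Real.sqrt 2 / 2⌋₊ := by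
  intro n _
  have hsqrt : 0 < √2 := by positivity
  constructor
  · rw [hH, hLP, ← inv_one_add_sqrt_two]
    exact floor_inv_mul_floor_mul_add_one (by linarith) n
  · rw [hH, hUP, ← one_sub_inv_one_add_sqrt_two_div_two,
      floor_one_sub_inv_mul_floor_mul_add_one (by linarith) n]
    congr 1
    ring
end

section
/- Let z be the Avdispahić–Zejnulahi sequence, let m(n) = (z(2) + ⋯ + z(n))/(n+1) for n ≥ 1 (which is an integer), and let γ = (√5−1)/2. Then m(n) = ⌊(n+1)γ⌋ for every n ≥ 1 that is not of the form F_{2k+1} − 1 with k ≥ 1; and for all k ≥ 1, m(F_{2k+1} − 1) = F_{2k} − 1 while ⌊F_{2k+1}·γ⌋ = F_{2k}. -/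
/-!
Since `1/γ = 1 + γ`, `⌊nγ⌋ ≥ k` holds exactly when `n ≥ k + ⌊kγ⌋ + 1`; so `n ↦ ⌊nγ⌋` grows by
steps `0` or `1`, and the position of a plateau of value `t` is determined by `t`. The sequence
has a closed form: `z(n) = ⌊nγ⌋` where `⌊·γ⌋` is flat at `n` and `z(n) = n + ⌊(n+1)γ⌋` where it
jumps, the two choices being swapped at each pair `F_{2k+1} - 1, F_{2k+1}`. The identity
`F_{n+1} γ = F_n - (-γ)^{n+1}` gives `⌊·γ⌋` next to Fibonacci numbers, and a telescoping count
gives `z(2) + ⋯ + z(n) = (n+1) (⌊(n+1)γ⌋ - [n = F_{2k+1} - 1])`. The closed form is injective,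
at most `2n`, and whenever it exceeds `n + 1` the value `z(n) - (n + 1)` has already been used;
hence it is the greedy choice at every step.
-/

open Nat (fib)
open Finset Real
open scoped goldenRatio

namespace AvdispahicZejnulahi

def greedySet (z : ℕ → ℕ) (n : ℕ) : Set ℕ :=
  {m | 0 < m ∧ (∀ i ∈ Icc 1 (n - 1), z i ≠ m) ∧
    ((∑ i ∈ Icc 1 (n - 1), z i) + m) % (n + 1) = 1}

lemma greedySet_congr {z c : ℕ → ℕ} {n : ℕ} (h : ∀ i ∈ Icc 1 (n - 1), z i = c i) :
    greedySet z n = greedySet c n := by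
  ext m
  simp +contextual only [greedySet, Set.mem_ofPred_eq, h]

lemma isLeast_greedySet {c : ℕ → ℕ} {n : ℕ} (hc1 : c 1 = 1) (hn : 2 ≤ n) (hpos : 0 < c n)
    (hle : c n ≤ 2 * n) (hdvd : n + 1 ∣ ∑ i ∈ Icc 2 n, c i)
    (hinj : ∀ j ∈ Icc 1 (n - 1), c j ≠ c n)
    (hgap : n + 2 ≤ c n → ∃ j ∈ Icc 1 (n - 1), c j = c n - (n + 1)) :
    IsLeast (greedySet c n) (c n) := by
  have hsum : ∑ i ∈ Icc 1 (n - 1), c i + c n = 1 + ∑ i ∈ Icc 2 n, c i := by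
    have h := sum_Icc_succ_top (show 1 ≤ n - 1 + 1 by omega) c
    rw [Nat.sub_add_cancel (by omega)] at h
    rw [← h, ← add_sum_Ioc_eq_sum_Icc (by omega), hc1, ← Icc_add_one_left_eq_Ioc]; rfl
  have hmod : (∑ i ∈ Icc 1 (n - 1), c i + c n) % (n + 1) = 1 := by
    obtain ⟨q, hq⟩ := hdvd
    rw [hsum, hq, Nat.add_mul_mod_self_left, Nat.mod_eq_of_lt (by omega)]
  refine ⟨⟨hpos, hinj, hmod⟩, fun m ⟨hm, hnot, hm_mod⟩ => ?_⟩
  -- a smaller candidate is congruent to `c n`, so it is `c n - (n + 1)`, which is taken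
  by_contra! hlt
  have hdiv : n + 1 ∣ c n - m :=
    (Nat.modEq_iff_dvd' hlt.le).1 (Nat.ModEq.add_left_cancel' _ (hm_mod.trans hmod.symm))
  have := Nat.eq_of_dvd_of_lt_two_mul (by omega) hdiv (by omega)
  obtain ⟨j, hj, hjm⟩ := hgap (by omega)
  exact hnot j hj (by omega)

lemma eq_of_isLeast_greedySet {z c : ℕ → ℕ} (hz1 : z 1 = 1) (hc1 : c 1 = 1)
    (hz : ∀ n, 2 ≤ n → IsLeast (greedySet z n) (z n))
    (hc : ∀ n, 2 ≤ n → IsLeast (greedySet c n) (c n)) : ∀ n, 1 ≤ n → z n = c n := by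
  intro n
  induction n using Nat.strong_induction_on with
  | _ n ih =>
    intro hn
    obtain rfl | hn := hn.eq_or_lt
    · rw [hz1, hc1]
    have hzn := hz n hn
    rw [greedySet_congr fun i hi => ih i (by simp at hi; omega) (by simp at hi; omega)] at hzn
    exact hzn.unique (hc n hn)

noncomputable def γ : ℝ := -ψ

lemma gamma_eq : γ = (√5 - 1) / 2 := by
  rw [γ, goldenConj]; ring

lemma gamma_pos : 0 < γ := neg_pos.2 goldenConj_neg

lemma gamma_lt_one : γ < 1 := neg_lt.2 neg_one_lt_goldenConj

lemma gamma_sq : γ ^ 2 = 1 - γ := by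
  rw [γ, neg_sq, goldenConj_sq]; ring

lemma irrational_gamma : Irrational γ := goldenConj_irrational.neg

noncomputable def gfloor (n : ℕ) : ℕ := ⌊(n : ℝ) * γ⌋₊

lemma natCast_mul_gamma_nonneg (n : ℕ) : 0 ≤ (n : ℝ) * γ :=
  mul_nonneg n.cast_nonneg gamma_pos.le

lemma gfloor_eq_iff {n y : ℕ} : gfloor n = y ↔ (y : ℝ) ≤ n * γ ∧ n * γ < y + 1 :=
  Nat.floor_eq_iff (natCast_mul_gamma_nonneg n)

lemma gfloor_mono : Monotone gfloor := fun _ _ h =>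
  Nat.floor_le_floor (mul_le_mul_of_nonneg_right (by exact_mod_cast h) gamma_pos.le)

lemma gfloor_lt_self {n : ℕ} (hn : 1 ≤ n) : gfloor n < n := by
  refine (Nat.floor_lt (natCast_mul_gamma_nonneg n)).2 ?_
  have : (1 : ℝ) ≤ n := by exact_mod_cast hn
  nlinarith [gamma_lt_one]

lemma gfloor_succ_le (n : ℕ) : gfloor (n + 1) ≤ gfloor n + 1 := by
  rw [gfloor, gfloor, ← Nat.floor_add_one (natCast_mul_gamma_nonneg n)]
  refine Nat.floor_le_floor ?_
  push_cast
  linarith [gamma_lt_one]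

lemma gfloor_succ_eq_or (n : ℕ) :
    gfloor (n + 1) = gfloor n ∨ gfloor (n + 1) = gfloor n + 1 := by
  have := gfloor_mono (by omega : n ≤ n + 1)
  have := gfloor_succ_le n
  omega

/-- Since `1/γ = 1 + γ`, `k ≤ nγ` means `k + kγ ≤ n`; irrationality makes this strict. -/
lemma le_gfloor_iff {k n : ℕ} (hk : 1 ≤ k) : k ≤ gfloor n ↔ k + gfloor k + 1 ≤ n := by
  have hne : (k : ℝ) + k * γ ≠ n :=
    ((irrational_gamma.natCast_mul (by omega : k ≠ 0)).natCast_add k).ne_nat n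
  calc k ≤ gfloor n ↔ (k : ℝ) ≤ n * γ := Nat.le_floor_iff (natCast_mul_gamma_nonneg n)
    _ ↔ (k : ℝ) + k * γ ≤ n := by
        constructor <;> intro h <;> nlinarith [gamma_sq, gamma_pos]
    _ ↔ (k : ℝ) + k * γ < n := ⟨fun h => h.lt_of_ne hne, le_of_lt⟩
    _ ↔ ⌊(k : ℝ) + k * γ⌋₊ < n :=
        (Nat.floor_lt (by linarith [natCast_mul_gamma_nonneg k])).symm
    _ ↔ k + gfloor k + 1 ≤ n := by
        rw [add_comm (k : ℝ), Nat.floor_add_natCast (natCast_mul_gamma_nonneg k), gfloor]; omega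

lemma gfloor_one : gfloor 1 = 0 := by
  rw [gfloor_eq_iff]; constructor <;> push_cast <;> linarith [gamma_pos, gamma_lt_one]

lemma one_le_gfloor {n : ℕ} (hn : 2 ≤ n) : 1 ≤ gfloor n :=
  (le_gfloor_iff le_rfl).2 (by rw [gfloor_one]; omega)

lemma gfloor_two : gfloor 2 = 1 := by
  have := one_le_gfloor le_rfl
  have := gfloor_lt_self (n := 2) (by omega)
  omega

lemma gfloor_plateau {j : ℕ} (ht : 1 ≤ gfloor j) (h : gfloor (j + 1) = gfloor j) :
    j = gfloor j + gfloor (gfloor j) + 1 ∧ gfloor (gfloor j + 1) = gfloor (gfloor j) + 1 := by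
  have h₁ := (le_gfloor_iff ht).1 le_rfl
  have h₂ := (le_gfloor_iff (k := gfloor j + 1) (n := j + 1) (by omega)).not.1 (by omega)
  have := gfloor_succ_eq_or (gfloor j)
  omega

lemma gfloor_of_jump {t : ℕ} (ht : 1 ≤ t) (h : gfloor (t + 1) = gfloor t + 1) :
    gfloor (t + gfloor t + 1) = t ∧ gfloor (t + gfloor t + 2) = t := by
  have h₁ := (le_gfloor_iff (n := t + gfloor t + 1) ht).2 le_rfl
  have h₂ := (le_gfloor_iff (k := t + 1) (n := t + gfloor t + 2) (by omega)).not.2 (by omega)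
  have := gfloor_mono (by omega : t + gfloor t + 1 ≤ t + gfloor t + 2)
  omega

lemma gamma_pow_pos (n : ℕ) : 0 < γ ^ n := pow_pos gamma_pos n

lemma gamma_pow_le {a b : ℕ} (h : a ≤ b) : γ ^ b ≤ γ ^ a :=
  pow_le_pow_of_le_one gamma_pos.le gamma_lt_one.le h

lemma gamma_pow_lt {a b : ℕ} (h : a < b) : γ ^ b < γ ^ a :=
  pow_lt_pow_right_of_lt_one₀ gamma_pos gamma_lt_one h

lemma fib_succ_mul_gamma (n : ℕ) : (fib (n + 1) : ℝ) * γ = fib n - (-γ) ^ (n + 1) := by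
  have := goldenConj_mul_fib_succ_add_fib n
  rw [γ, neg_neg]; linarith

lemma fib_odd_mul_gamma (k : ℕ) :
    (fib (2 * k + 1) : ℝ) * γ = fib (2 * k) + γ ^ (2 * k + 1) := by
  rw [fib_succ_mul_gamma, Odd.neg_pow (by simp)]; ring

lemma fib_even_mul_gamma (k : ℕ) :
    (fib (2 * k + 2) : ℝ) * γ = fib (2 * k + 1) - γ ^ (2 * k + 2) := by
  rw [fib_succ_mul_gamma, Even.neg_pow (by simp [parity_simps])]

lemma gfloor_fib_odd (k : ℕ) : gfloor (fib (2 * k + 1)) = fib (2 * k) := by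
  rw [gfloor_eq_iff, fib_odd_mul_gamma]
  have := gamma_pow_lt (a := 0) (b := 2 * k + 1) (by omega)
  constructor <;> linarith [gamma_pow_pos (2 * k + 1), pow_zero γ]

lemma gfloor_fib_odd_sub_one {k : ℕ} (hk : 1 ≤ k) :
    gfloor (fib (2 * k + 1) - 1) = fib (2 * k) - 1 := by
  rw [gfloor_eq_iff, Nat.cast_pred (Nat.fib_pos.2 (by omega)),
    Nat.cast_pred (Nat.fib_pos.2 (by omega)), sub_mul, fib_odd_mul_gamma]
  have := gamma_pow_lt (a := 1) (b := 2 * k + 1) (by omega)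
  constructor <;> nlinarith [gamma_pow_pos (2 * k + 1), gamma_lt_one]

lemma gfloor_fib_odd_add_one {k : ℕ} (hk : 1 ≤ k) :
    gfloor (fib (2 * k + 1) + 1) = fib (2 * k) := by
  rw [gfloor_eq_iff]; push_cast; rw [add_mul, fib_odd_mul_gamma]
  have := gamma_pow_lt (a := 2) (b := 2 * k + 1) (by omega)
  constructor <;> nlinarith [gamma_pow_pos (2 * k + 1), gamma_pos, gamma_sq]

lemma gfloor_fib_even (k : ℕ) : gfloor (fib (2 * k + 2)) = fib (2 * k + 1) - 1 := by
  rw [gfloor_eq_iff, Nat.cast_pred (Nat.fib_pos.2 (by omega)), fib_even_mul_gamma]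
  have := gamma_pow_lt (a := 0) (b := 2 * k + 2) (by omega)
  constructor <;> linarith [gamma_pow_pos (2 * k + 2), pow_zero γ]

lemma gfloor_fib_even_sub_one (k : ℕ) : gfloor (fib (2 * k + 2) - 1) = fib (2 * k + 1) - 1 := by
  rw [gfloor_eq_iff, Nat.cast_pred (Nat.fib_pos.2 (by omega)),
    Nat.cast_pred (Nat.fib_pos.2 (by omega)), sub_mul, fib_even_mul_gamma]
  have := gamma_pow_le (a := 2) (b := 2 * k + 2) (by omega)
  constructor <;> nlinarith [gamma_pow_pos (2 * k + 2), gamma_pos, gamma_sq]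

lemma gfloor_fib_even_add_one (k : ℕ) : gfloor (fib (2 * k + 2) + 1) = fib (2 * k + 1) := by
  rw [gfloor_eq_iff]; push_cast; rw [add_mul, fib_even_mul_gamma]
  have := gamma_pow_le (a := 1) (b := 2 * k + 2) (by omega)
  constructor <;> nlinarith [gamma_pow_pos (2 * k + 2), gamma_lt_one]

def IsExceptional (n : ℕ) : Prop := ∃ k, 1 ≤ k ∧ n = fib (2 * k + 1) - 1

lemma isExceptional_one : IsExceptional 1 := ⟨1, le_rfl, rfl⟩

lemma one_le_fib_odd_sub_one {k : ℕ} (hk : 1 ≤ k) : 1 ≤ fib (2 * k + 1) - 1 := by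
  have : fib 3 ≤ fib (2 * k + 1) := Nat.fib_mono (by omega)
  simp only [show fib 3 = 2 from rfl] at this
  omega

lemma IsExceptional.not_succ {n : ℕ} (h : IsExceptional n) : ¬ IsExceptional (n + 1) := by
  rintro ⟨j, hj, hjn⟩
  obtain ⟨k, hk, rfl⟩ := h
  have := one_le_fib_odd_sub_one hk
  rcases le_or_gt j k with hjk | hjk
  · have := Nat.fib_mono (show 2 * j + 1 ≤ 2 * k + 1 by omega)
    omega
  · have h₁ := Nat.fib_mono (show 2 * k + 3 ≤ 2 * j + 1 by omega)
    have h₂ : fib 4 ≤ fib (2 * k + 2) := Nat.fib_mono (by omega)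
    have h₃ : fib (2 * k + 3) = fib (2 * k + 1) + fib (2 * k + 2) := Nat.fib_add_two
    simp only [show fib 4 = 3 from rfl] at h₂
    omega

lemma IsExceptional.gfloor_succ {n : ℕ} (h : IsExceptional n) :
    gfloor (n + 1) = gfloor n + 1 := by
  obtain ⟨k, hk, rfl⟩ := h
  have := one_le_fib_odd_sub_one hk
  have : 1 ≤ fib (2 * k) := Nat.fib_pos.2 (by omega)
  rw [Nat.sub_add_cancel (by omega), gfloor_fib_odd, gfloor_fib_odd_sub_one hk]
  omega

lemma IsExceptional.gfloor_add_two {n : ℕ} (h : IsExceptional n) :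
    gfloor (n + 2) = gfloor (n + 1) := by
  obtain ⟨k, hk, rfl⟩ := h
  have := one_le_fib_odd_sub_one hk
  rw [show fib (2 * k + 1) - 1 + 2 = fib (2 * k + 1) + 1 by omega,
    Nat.sub_add_cancel (by omega), gfloor_fib_odd, gfloor_fib_odd_add_one hk]

/-- Here `n = F_{2k+3} - 1`, `⌊nγ⌋ = F_{2k+2} - 1` and `⌊⌊nγ⌋γ⌋ = F_{2k+1} - 1`. -/
lemma IsExceptional.gfloor_gfloor {n : ℕ} (hn : 2 ≤ n) (h : IsExceptional n) :
    gfloor (gfloor n + 1) = gfloor (gfloor n) ∧ IsExceptional (gfloor (gfloor n)) := by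
  obtain ⟨k, hk, rfl⟩ := h
  obtain ⟨i, rfl⟩ : ∃ i, k = i + 2 := ⟨k - 2, by
    have : k ≠ 1 := by rintro rfl; simp [show fib 3 = 2 from rfl] at hn
    omega⟩
  rw [gfloor_fib_odd_sub_one (by omega), show 2 * (i + 2) = 2 * (i + 1) + 2 by ring,
    Nat.sub_add_cancel (Nat.fib_pos.2 (by omega)), gfloor_fib_even, gfloor_fib_even_sub_one]
  exact ⟨rfl, i + 1, by omega, rfl⟩

def IsSmall (n : ℕ) : Prop :=
  IsExceptional n ∨ (¬ IsExceptional (n - 1) ∧ gfloor (n + 1) = gfloor n)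

open Classical in
noncomputable def azSeq (n : ℕ) : ℕ :=
  if n = 1 then 1 else if IsSmall n then gfloor n else n + gfloor (n + 1)

lemma azSeq_one : azSeq 1 = 1 := if_pos rfl

lemma azSeq_of_isSmall {n : ℕ} (hn : n ≠ 1) (h : IsSmall n) : azSeq n = gfloor n := by
  rw [azSeq, if_neg hn, if_pos h]

lemma azSeq_of_not_isSmall {n : ℕ} (hn : n ≠ 1) (h : ¬ IsSmall n) :
    azSeq n = n + gfloor (n + 1) := by
  rw [azSeq, if_neg hn, if_neg h]

lemma azSeq_fib_odd {k : ℕ} (hk : 1 ≤ k) : azSeq (fib (2 * k + 1)) = fib (2 * k + 2) := by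
  have hE : IsExceptional (fib (2 * k + 1) - 1) := ⟨k, hk, rfl⟩
  have h₁ := one_le_fib_odd_sub_one hk
  have hnE : ¬ IsExceptional (fib (2 * k + 1)) := by
    simpa [Nat.sub_add_cancel (show 1 ≤ fib (2 * k + 1) by omega)] using hE.not_succ
  rw [azSeq_of_not_isSmall (by omega) (by simp [IsSmall, hnE, hE]), gfloor_fib_odd_add_one hk,
    Nat.fib_add_two, add_comm]

open Classical in
lemma sum_Icc_two_azSeq {n : ℕ} (hn : 1 ≤ n) :
    ∑ i ∈ Icc 2 n, azSeq i + (n + 1) * (if IsExceptional n then 1 else 0)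
      = (n + 1) * gfloor (n + 1) := by
  induction n, hn using Nat.le_induction with
  | base => simp [isExceptional_one, gfloor_two]
  | succ n hn ih =>
    rw [sum_Icc_succ_top (by omega)]
    have hsmall : IsSmall (n + 1) ↔
        IsExceptional (n + 1) ∨ (¬ IsExceptional n ∧ gfloor (n + 2) = gfloor (n + 1)) := by
      simp [IsSmall]
    by_cases hN : IsExceptional (n + 1)
    · have hn' : ¬ IsExceptional n := fun h => h.not_succ hN
      rw [if_neg hn'] at ih
      rw [if_pos hN, azSeq_of_isSmall (by omega) (hsmall.2 (Or.inl hN)), hN.gfloor_succ]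
      linarith
    rw [if_neg hN]
    by_cases hn' : IsExceptional n
    · rw [if_pos hn'] at ih
      rw [azSeq_of_not_isSmall (by omega) (by tauto), hn'.gfloor_add_two]
      linarith
    rw [if_neg hn'] at ih
    rcases gfloor_succ_eq_or (n + 1) with h | h
    · rw [azSeq_of_isSmall (by omega) (hsmall.2 (Or.inr ⟨hn', h⟩)), h]
      linarith
    · rw [azSeq_of_not_isSmall (by omega) (by simp [hsmall, hN, h]), h]
      linarith

lemma gfloor_succ_eq_of_lt {j n : ℕ} (hjn : j < n) (h : gfloor j = gfloor n) :
    gfloor (j + 1) = gfloor j :=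
  le_antisymm (h ▸ gfloor_mono hjn) (gfloor_mono j.le_succ)

lemma not_isSmall_cases {j : ℕ} (hj : 2 ≤ j) (h : ¬ IsSmall j) :
    (¬ IsExceptional j ∧ gfloor (j + 1) = gfloor j + 1 ∧ azSeq j = j + gfloor j + 1) ∨
      ∃ i, 1 ≤ i ∧ j = fib (2 * i + 1) ∧ azSeq j = fib (2 * i + 2) := by
  simp only [IsSmall, not_or, not_and_or, not_not] at h
  obtain ⟨hE, hE' | hjump⟩ := h
  · obtain ⟨i, hi, hj'⟩ := hE'
    have hj_eq : j = fib (2 * i + 1) := by have := one_le_fib_odd_sub_one hi; omega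
    exact Or.inr ⟨i, hi, hj_eq, hj_eq ▸ azSeq_fib_odd hi⟩
  · have hjump : gfloor (j + 1) = gfloor j + 1 := (gfloor_succ_eq_or j).resolve_left hjump
    refine Or.inl ⟨hE, hjump, ?_⟩
    rw [azSeq_of_not_isSmall (by omega) (by simp [IsSmall, hE, hjump]), hjump, add_assoc]

lemma gfloor_fib_even_succ (k : ℕ) :
    gfloor (fib (2 * k + 2) + 1) = gfloor (fib (2 * k + 2)) + 1 := by
  rw [gfloor_fib_even_add_one, gfloor_fib_even, Nat.sub_add_cancel (Nat.fib_pos.2 (by omega))]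

lemma azSeq_ne_gfloor_of_isExceptional {j n : ℕ} (hn : 2 ≤ n) (hE : IsExceptional n)
    (hj : 1 ≤ j) (hjn : j < n) : azSeq j ≠ gfloor n := by
  obtain ⟨hflat, hE'⟩ := hE.gfloor_gfloor hn
  intro h
  obtain rfl | hj := hj.eq_or_lt
  · rw [← h, azSeq_one, gfloor_two, gfloor_one] at hflat
    omega
  by_cases hs : IsSmall j
  · rw [azSeq_of_isSmall (by omega) hs] at h
    have := (gfloor_plateau (one_le_gfloor hj) (gfloor_succ_eq_of_lt hjn h)).2
    rw [h, hflat] at this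
    omega
  rcases not_isSmall_cases hj hs with ⟨hjE, hjump, hval⟩ | ⟨i, -, -, hval⟩
  · rw [← h, hval, (gfloor_of_jump (by omega) hjump).1] at hE'
    exact hjE hE'
  · rw [← h, hval, gfloor_fib_even_succ] at hflat
    omega

lemma azSeq_ne_gfloor_of_plateau {j n : ℕ} (hn : 2 ≤ n) (hE : ¬ IsExceptional (n - 1))
    (hp : gfloor (n + 1) = gfloor n) (hj : 1 ≤ j) (hjn : j < n) : azSeq j ≠ gfloor n := by
  obtain ⟨hn_eq, hjump⟩ := gfloor_plateau (one_le_gfloor hn) hp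
  intro h
  obtain rfl | hj := hj.eq_or_lt
  · rw [← h, azSeq_one, gfloor_one] at hn_eq
    exact hE (by rw [hn_eq]; exact isExceptional_one)
  by_cases hs : IsSmall j
  · rw [azSeq_of_isSmall (by omega) hs] at h
    have := (gfloor_plateau (one_le_gfloor hj) (gfloor_succ_eq_of_lt hjn h)).1
    rw [h, ← hn_eq] at this
    omega
  rcases not_isSmall_cases hj hs with ⟨-, hjj, hval⟩ | ⟨i, hi, -, hval⟩
  · rw [← h, hval, (gfloor_of_jump (by omega) hjj).1, (gfloor_of_jump (by omega) hjj).2] at hjump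
    omega
  · rw [← h, hval, gfloor_fib_even] at hn_eq
    refine hE ⟨i + 1, by omega, ?_⟩
    have := Nat.fib_pos.2 (show 0 < 2 * i + 1 by omega)
    have : fib (2 * i + 3) = fib (2 * i + 1) + fib (2 * i + 2) := Nat.fib_add_two
    rw [show 2 * (i + 1) + 1 = 2 * i + 3 by ring]
    omega

lemma azSeq_ne_of_lt {j n : ℕ} (hj : 1 ≤ j) (hjn : j < n) : azSeq j ≠ azSeq n := by
  have hn : 2 ≤ n := by omega
  by_cases hs : IsSmall n
  · rw [azSeq_of_isSmall (by omega) hs]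
    rcases hs with hE | ⟨hE, hp⟩
    · exact azSeq_ne_gfloor_of_isExceptional hn hE hj hjn
    · exact azSeq_ne_gfloor_of_plateau hn hE hp hj hjn
  rw [azSeq_of_not_isSmall (by omega) hs]
  obtain rfl | hj := hj.eq_or_lt
  · rw [azSeq_one]; omega
  by_cases hjs : IsSmall j
  · rw [azSeq_of_isSmall (by omega) hjs]
    have := gfloor_lt_self (n := j) (by omega)
    omega
  · rw [azSeq_of_not_isSmall (by omega) hjs]
    have := gfloor_mono (show j + 1 ≤ n + 1 by omega)
    omega

lemma exists_azSeq_eq {t : ℕ} (ht : 1 ≤ t) :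
    ∃ j, 1 ≤ j ∧ j ≤ t + gfloor t + 1 ∧ azSeq j = t := by
  obtain rfl | ht := ht.eq_or_lt
  · exact ⟨1, le_rfl, by omega, azSeq_one⟩
  rcases gfloor_succ_eq_or t with hflat | hjump
  · obtain ⟨ht_eq, hjump⟩ := gfloor_plateau (one_le_gfloor ht) hflat
    have hp1 := one_le_gfloor ht
    generalize gfloor t = p at ht_eq hjump hp1
    by_cases hp : IsExceptional p
    · obtain ⟨i, hi, hp_eq⟩ := hp
      have hw : IsExceptional (fib (2 * i + 3) - 1) := ⟨i + 1, by omega, rfl⟩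
      have h₁ : gfloor p = fib (2 * i) - 1 := hp_eq ▸ gfloor_fib_odd_sub_one hi
      have h₂ : gfloor (fib (2 * i + 3) - 1) = fib (2 * i + 2) - 1 :=
        gfloor_fib_odd_sub_one (k := i + 1) (by omega)
      have h₃ : fib (2 * i + 2) = fib (2 * i) + fib (2 * i + 1) := Nat.fib_add_two
      have h₄ : fib (2 * i + 3) = fib (2 * i + 1) + fib (2 * i + 2) := Nat.fib_add_two
      have := Nat.fib_pos.2 (show 0 < 2 * i by omega)
      have := Nat.fib_pos.2 (show 0 < 2 * i + 1 by omega)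
      refine ⟨fib (2 * i + 3) - 1, by omega, by omega, ?_⟩
      rw [azSeq_of_isSmall (by omega) (Or.inl hw), h₂]
      omega
    · have hp2 : 2 ≤ p := lt_of_le_of_ne hp1 fun h => hp (h ▸ isExceptional_one)
      have hs : ¬ IsSmall p := by simp [IsSmall, hp, hjump]
      refine ⟨p, by omega, by omega, ?_⟩
      rw [azSeq_of_not_isSmall (by omega) hs, hjump]
      omega
  · obtain ⟨h₀, h₁⟩ := gfloor_of_jump (by omega) hjump
    by_cases hs : IsSmall (t + gfloor t + 1)
    · exact ⟨_, by omega, le_rfl, by rw [azSeq_of_isSmall (by omega) hs, h₀]⟩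
    rcases not_isSmall_cases (by omega) hs with ⟨-, hj, -⟩ | ⟨i, hi, hj, -⟩
    · rw [show t + gfloor t + 1 + 1 = t + gfloor t + 2 by ring] at hj
      omega
    rw [hj, gfloor_fib_odd] at h₀
    obtain ⟨i, rfl⟩ : ∃ i', i = i' + 2 := ⟨i - 2, by
      have : i ≠ 1 := by rintro rfl; simp [show fib 2 = 1 from rfl] at h₀; omega
      omega⟩
    refine ⟨fib (2 * (i + 1) + 1), Nat.fib_pos.2 (by omega), ?_, ?_⟩
    · rw [hj]; exact Nat.fib_mono (by omega)
    · rw [azSeq_fib_odd (by omega), ← h₀]; ring_nf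

lemma exists_azSeq_eq_sub {n : ℕ} (hn : 2 ≤ n) (h : n + 2 ≤ azSeq n) :
    ∃ j ∈ Icc 1 (n - 1), azSeq j = azSeq n - (n + 1) := by
  have hs : ¬ IsSmall n := fun hs => by
    rw [azSeq_of_isSmall (by omega) hs] at h
    have := gfloor_lt_self (n := n) (by omega)
    omega
  have hval := azSeq_of_not_isSmall (by omega) hs
  obtain ⟨j, hj, hjt, hval_j⟩ := exists_azSeq_eq (t := gfloor (n + 1) - 1) (by omega)
  have hle : gfloor (n + 1) - 1 + gfloor (gfloor (n + 1) - 1) + 1 ≤ n :=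
    (le_gfloor_iff (by omega)).1 (by have := gfloor_succ_le n; omega)
  have hjn : j ≠ n := by rintro rfl; omega
  exact ⟨j, mem_Icc.2 ⟨hj, by omega⟩, by omega⟩

lemma azSeq_le {n : ℕ} (hn : 1 ≤ n) : azSeq n ≤ 2 * n := by
  obtain rfl | hn := hn.eq_or_lt
  · rw [azSeq_one]; omega
  by_cases hs : IsSmall n
  · rw [azSeq_of_isSmall (by omega) hs]
    have := gfloor_lt_self (n := n) (by omega)
    omega
  · rw [azSeq_of_not_isSmall (by omega) hs]
    have := gfloor_lt_self (n := n + 1) (by omega)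
    omega

lemma azSeq_pos {n : ℕ} (hn : 2 ≤ n) : 0 < azSeq n := by
  by_cases hs : IsSmall n
  · rw [azSeq_of_isSmall (by omega) hs]; exact one_le_gfloor hn
  · rw [azSeq_of_not_isSmall (by omega) hs]; omega

lemma isLeast_greedySet_azSeq {n : ℕ} (hn : 2 ≤ n) :
    IsLeast (greedySet azSeq n) (azSeq n) := by
  refine isLeast_greedySet azSeq_one hn (azSeq_pos hn) (azSeq_le (by omega)) ?_
    (fun j hj => by have := mem_Icc.1 hj; exact azSeq_ne_of_lt this.1 (by omega))
    (exists_azSeq_eq_sub hn)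
  have h := sum_Icc_two_azSeq (n := n) (by omega)
  exact (Nat.dvd_add_left (dvd_mul_right _ _)).1 (h ▸ dvd_mul_right _ _)

end AvdispahicZejnulahi

open AvdispahicZejnulahi

/-- Averages of the Avdispahić–Zejnulahi sequence: with `z` the greedy
Avdispahić–Zejnulahi sequence and `m(n) = (z(2) + ⋯ + z(n))/(n+1)` (an
integer), and `γ = (√5−1)/2`, one has `m(n) = ⌊(n+1)γ⌋` for every `n ≥ 1`
not of the form `F_{2k+1} − 1` (`k ≥ 1`); and for all `k ≥ 1`,
`m(F_{2k+1} − 1) = F_{2k} − 1` while `⌊F_{2k+1}·γ⌋ = F_{2k}`. -/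
theorem avdispahic_zejnulahi_averages
    (γ : ℝ) (hγ : γ = (Real.sqrt 5 - 1) / 2)
    (z : ℕ → ℕ) (hz1 : z 1 = 1)
    (hz : ∀ n : ℕ, 2 ≤ n →
      IsLeast {m : ℕ | 0 < m ∧ (∀ i ∈ Finset.Icc 1 (n - 1), z i ≠ m) ∧
        ((∑ i ∈ Finset.Icc 1 (n - 1), z i) + m) % (n + 1) = 1} (z n))
    (m : ℕ → ℕ)
    (hm : ∀ n : ℕ, 1 ≤ n → (n + 1) * m n = ∑ i ∈ Finset.Icc 2 n, z i) :
    (∀ n : ℕ, 1 ≤ n → (¬ ∃ k : ℕ, 1 ≤ k ∧ n = Nat.fib (2 * k + 1) - 1) →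
      m n = ⌊((n : ℝ) + 1) * γ⌋₊) ∧
    (∀ k : ℕ, 1 ≤ k →
      m (Nat.fib (2 * k + 1) - 1) = Nat.fib (2 * k) - 1 ∧
      ⌊(Nat.fib (2 * k + 1) : ℝ) * γ⌋₊ = Nat.fib (2 * k)) := by
  classical
  rw [← gamma_eq] at hγ
  subst hγ
  have hzc := eq_of_isLeast_greedySet hz1 azSeq_one hz fun n hn => isLeast_greedySet_azSeq hn
  have hm_add (n : ℕ) (hn : 1 ≤ n) :
      m n + (if IsExceptional n then 1 else 0) = gfloor (n + 1) := by
    have h := sum_Icc_two_azSeq hn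
    rw [← sum_congr rfl fun i hi => hzc i (by simp at hi; omega), ← hm n hn, ← mul_add] at h
    exact Nat.eq_of_mul_eq_mul_left (by omega) h
  refine ⟨fun n hn hE => ?_, fun k hk => ⟨?_, gfloor_fib_odd k⟩⟩
  · have h := hm_add n hn
    rw [if_neg (show ¬ IsExceptional n from hE)] at h
    rw [← Nat.cast_add_one, ← gfloor, ← h, add_zero]
  · have h := hm_add _ (one_le_fib_odd_sub_one hk)
    rw [if_pos ⟨k, hk, rfl⟩, Nat.sub_add_cancel (by have := one_le_fib_odd_sub_one hk; omega),
      gfloor_fib_odd] at h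
    omega
end

section
/- Let a, b be Hofstadter's married functions and let z be the Avdispahić–Zejnulahi sequence with averages m(n) = (z(2) + ⋯ + z(n))/(n+1). Then b(n) = m(n) for all n ≥ 1. -/
/-- Hofstadter's married function `b` equals the averaged
Avdispahić–Zejnulahi sequence: with `a(0) = 1`, `b(0) = 0`,
`a(n) = n − b(a(n−1))`, `b(n) = n − a(b(n−1))` for `n ≥ 1`, `z` the greedy
Avdispahić–Zejnulahi sequence and `m(n) = (z(2) + ⋯ + z(n))/(n+1)`,
one has `b(n) = m(n)` for all `n ≥ 1`. -/
theorem married_b_eq_avdispahic_average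
    (a b : ℕ → ℕ) (ha0 : a 0 = 1) (hb0 : b 0 = 0)
    (ha : ∀ n : ℕ, 1 ≤ n → a n = n - b (a (n - 1)))
    (hb : ∀ n : ℕ, 1 ≤ n → b n = n - a (b (n - 1)))
    (z : ℕ → ℕ) (hz1 : z 1 = 1)
    (hz : ∀ n : ℕ, 2 ≤ n →
      IsLeast {k : ℕ | 0 < k ∧ (∀ i ∈ Finset.Icc 1 (n - 1), z i ≠ k) ∧
        ((∑ i ∈ Finset.Icc 1 (n - 1), z i) + k) % (n + 1) = 1} (z n))
    (m : ℕ → ℕ)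
    (hm : ∀ n : ℕ, 1 ≤ n → (n + 1) * m n = ∑ i ∈ Finset.Icc 2 n, z i) :
    ∀ n : ℕ, 1 ≤ n → b n = m n := by
  -- successor forms of the recurrences
  have ha' : ∀ n : ℕ, a (n + 1) = (n + 1) - b (a n) := by
    intro n
    have := ha (n + 1) (by omega)
    simpa using this
  have hb' : ∀ n : ℕ, b (n + 1) = (n + 1) - a (b n) := by
    intro n
    have := hb (n + 1) (by omega)
    simpa using this
  have hb1 : b 1 = 0 := by rw [hb' 0, hb0, ha0]
  have ha1 : a 1 = 1 := by rw [ha' 0, ha0, hb1]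
  have hb2 : b 2 = 1 := by
    have e : b 2 = 2 - a (b 1) := hb' 1
    rw [hb1, ha0] at e; omega
  have ha2 : a 2 = 2 := by
    have e : a 2 = 2 - b (a 1) := ha' 1
    rw [ha1, hb1] at e; omega
  have hb3 : b 3 = 2 := by
    have e : b 3 = 3 - a (b 2) := hb' 2
    rw [hb2, ha1] at e; omega
  -- trivial upper bounds
  have aLE : ∀ k : ℕ, 1 ≤ k → a k ≤ k := by
    intro k hk
    obtain ⟨j, rfl⟩ : ∃ j, k = j + 1 := ⟨k - 1, by omega⟩
    rw [ha']; omega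
  have bLE : ∀ k : ℕ, b k ≤ k := by
    intro k
    cases k with
    | zero => simp [hb0]
    | succ j => rw [hb']; omega
  -- the basic package: positivity, strict upper bound, exact identities, 0/1 steps
  have pack : ∀ n : ℕ, (1 ≤ a n) ∧ (b (n + 1) ≤ n) ∧
      (a (n + 1) + b (a n) = n + 1) ∧ (b (n + 1) + a (b n) = n + 1) ∧
      (a (n + 1) = a n ∨ a (n + 1) = a n + 1) ∧
      (b (n + 1) = b n ∨ b (n + 1) = b n + 1) := by
    intro n
    induction n using Nat.strong_induction_on with
    | _ n IH =>
      rcases Nat.lt_or_ge n 2 with hn | hn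
      · interval_cases n
        · refine ⟨by rw [ha0], by rw [hb1], ?_, ?_, ?_, ?_⟩
          · rw [ha1, ha0, hb1]
          · rw [hb1, hb0, ha0]
          · left; rw [ha1, ha0]
          · left; rw [hb1, hb0]
        · refine ⟨by rw [ha1], by rw [hb2], ?_, ?_, ?_, ?_⟩
          · rw [ha2, ha1, hb1]
          · rw [hb2, hb1, ha0]
          · right; rw [ha2, ha1]
          · right; rw [hb2, hb1]
      · obtain ⟨k, rfl⟩ : ∃ k, n = k + 2 := ⟨n - 2, by omega⟩
        -- bounds on inner terms
        have hak1 : a (k + 1) ≤ k + 1 := aLE (k + 1) (by omega)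
        have hak2 : a (k + 2) ≤ k + 2 := aLE (k + 2) (by omega)
        have hbk1 : b (k + 2) ≤ k + 1 := by
          have e : b (k + 2) = (k + 2) - a (b (k + 1)) := hb' (k + 1)
          have hb1' : b (k + 1) ≤ k := (IH k (by omega)).2.1
          have : 1 ≤ a (b (k + 1)) := (IH (b (k + 1)) (by omega)).1
          omega
        have hbak1 : b (a (k + 1)) ≤ k + 1 := by
          rcases Nat.eq_zero_or_pos (a (k + 1)) with h0 | h0
          · rw [h0, hb0]; omega
          · obtain ⟨j, hj⟩ : ∃ j, a (k + 1) = j + 1 := ⟨a (k + 1) - 1, by omega⟩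
            have hjk : j ≤ k := by omega
            have := (IH j (by omega)).2.1
            rw [hj]; omega
        have p1 : 1 ≤ a (k + 2) := by
          have e : a (k + 2) = (k + 2) - b (a (k + 1)) := ha' (k + 1)
          omega
        have p2 : b (k + 3) ≤ k + 2 := by
          have e : b (k + 3) = (k + 3) - a (b (k + 2)) := hb' (k + 2)
          have : 1 ≤ a (b (k + 2)) := (IH (b (k + 2)) (by omega)).1
          omega
        have p3 : a (k + 3) + b (a (k + 2)) = k + 3 := by
          have e : a (k + 3) = (k + 3) - b (a (k + 2)) := ha' (k + 2)
          have h2 : b (a (k + 2)) ≤ a (k + 2) := bLE _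
          omega
        have p4 : b (k + 3) + a (b (k + 2)) = k + 3 := by
          have e : b (k + 3) = (k + 3) - a (b (k + 2)) := hb' (k + 2)
          have h2 : a (b (k + 2)) ≤ k + 2 := by
            rcases Nat.eq_zero_or_pos (b (k + 2)) with h0 | h0
            · rw [h0, ha0]; omega
            · have := aLE (b (k + 2)) h0; omega
          omega
        have q3 : a (k + 2) + b (a (k + 1)) = k + 2 := (IH (k + 1) (by omega)).2.2.1
        have q4 : b (k + 2) + a (b (k + 1)) = k + 2 := (IH (k + 1) (by omega)).2.2.2.1
        have qd5 : a (k + 2) = a (k + 1) ∨ a (k + 2) = a (k + 1) + 1 :=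
          (IH (k + 1) (by omega)).2.2.2.2.1
        have qd6 : b (k + 2) = b (k + 1) ∨ b (k + 2) = b (k + 1) + 1 :=
          (IH (k + 1) (by omega)).2.2.2.2.2
        have p5 : a (k + 3) = a (k + 2) ∨ a (k + 3) = a (k + 2) + 1 := by
          rcases qd5 with hf | hs
          · -- a (k+2) = a (k+1)
            rw [hf] at p3
            omega
          · -- a (k+2) = a (k+1) + 1
            have hlt : a (k + 1) < k + 2 := by omega
            have hstep : b (a (k + 1) + 1) = b (a (k + 1)) ∨
                b (a (k + 1) + 1) = b (a (k + 1)) + 1 := (IH (a (k + 1)) hlt).2.2.2.2.2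
            rw [← hs] at hstep
            omega
        have p6 : b (k + 3) = b (k + 2) ∨ b (k + 3) = b (k + 2) + 1 := by
          rcases qd6 with hf | hs
          · rw [hf] at p4
            omega
          · have hlt : b (k + 1) < k + 2 := by omega
            have hstep : a (b (k + 1) + 1) = a (b (k + 1)) ∨
                a (b (k + 1) + 1) = a (b (k + 1)) + 1 := (IH (b (k + 1)) hlt).2.2.2.2.1
            rw [← hs] at hstep
            omega
        exact ⟨p1, p2, p3, p4, p5, p6⟩
  have aPos : ∀ k : ℕ, 1 ≤ a k := fun k => (pack k).1
  have bBnd : ∀ k : ℕ, b (k + 1) ≤ k := fun k => (pack k).2.1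
  have idA : ∀ k : ℕ, a (k + 1) + b (a k) = k + 1 := fun k => (pack k).2.2.1
  have idB : ∀ k : ℕ, b (k + 1) + a (b k) = k + 1 := fun k => (pack k).2.2.2.1
  have aStep : ∀ k : ℕ, a (k + 1) = a k ∨ a (k + 1) = a k + 1 :=
    fun k => (pack k).2.2.2.2.1
  have bStep : ∀ k : ℕ, b (k + 1) = b k ∨ b (k + 1) = b k + 1 :=
    fun k => (pack k).2.2.2.2.2
  have bMono : Monotone b := monotone_nat_of_le_succ (fun k => by rcases bStep k with h | h <;> omega)
  -- the key "inverse" identities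
  have key : ∀ v : ℕ,
      (∀ n, 1 ≤ n → n + b n = v → a v = n) ∧
      (∀ n, 1 ≤ n → n + b n + 1 = v → a v = n + 1) ∧
      (∀ n, n + a n = v → b v = n) ∧
      (∀ n, n + a n + 1 = v → b v = n + 1) := by
    intro v
    induction v using Nat.strong_induction_on with
    | _ v IH =>
      have keyA : ∀ n, 1 ≤ n → n + b n = v → a v = n := by
        intro n hn hv
        rcases Nat.lt_or_ge n 2 with h2 | h2
        · have hn1 : n = 1 := by omega
          subst hn1
          rw [hb1] at hv
          have : v = 1 := by omega
          rw [this, ha1]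
        · have hbn : 1 ≤ b n := by
            have := bMono (show 2 ≤ n from h2)
            rw [hb2] at this; omega
          obtain ⟨w, rfl⟩ : ∃ w, v = w + 1 := ⟨v - 1, by omega⟩
          obtain ⟨j, rfl⟩ : ∃ j, n = j + 1 := ⟨n - 1, by omega⟩
          have eA := idA w
          rcases bStep j with hf | hs
          · -- b (j+1) = b j
            have haw : a w = j := (IH w (by omega)).1 j (by omega) (by omega)
            rw [haw] at eA
            omega
          · have haw : a w = j + 1 := (IH w (by omega)).2.1 j (by omega) (by omega)
            rw [haw] at eA
            omega
      have keyA' : ∀ n, 1 ≤ n → n + b n + 1 = v → a v = n + 1 := by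
        intro n hn hv
        obtain ⟨w, rfl⟩ : ∃ w, v = w + 1 := ⟨v - 1, by omega⟩
        have haw : a w = n := (IH w (by omega)).1 n hn (by omega)
        have eA := idA w
        rw [haw] at eA
        omega
      have keyB : ∀ n, n + a n = v → b v = n := by
        intro n hv
        rcases Nat.eq_zero_or_pos n with h0 | h0
        · subst h0
          rw [ha0] at hv
          have : v = 1 := by omega
          rw [this, hb1]
        · have han : 1 ≤ a n := aPos n
          obtain ⟨w, rfl⟩ : ∃ w, v = w + 1 := ⟨v - 1, by omega⟩
          obtain ⟨j, rfl⟩ : ∃ j, n = j + 1 := ⟨n - 1, by omega⟩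
          have eB := idB w
          rcases aStep j with hf | hs
          · have hbw : b w = j := (IH w (by omega)).2.2.1 j (by omega)
            rw [hbw] at eB
            omega
          · have hbw : b w = j + 1 := (IH w (by omega)).2.2.2 j (by omega)
            rw [hbw] at eB
            omega
      have keyB' : ∀ n, n + a n + 1 = v → b v = n + 1 := by
        intro n hv
        obtain ⟨w, rfl⟩ : ∃ w, v = w + 1 := ⟨v - 1, by omega⟩
        have hbw : b w = n := (IH w (by omega)).2.2.1 n (by omega)
        have eB := idB w
        rw [hbw] at eB
        omega
      exact ⟨keyA, keyA', keyB, keyB'⟩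
  -- no three consecutive equal values of b
  have noTriple : ∀ k : ℕ, ¬ (b (k + 2) = b (k + 1) ∧ b (k + 1) = b k) := by
    rintro k ⟨h1, h2⟩
    have e1 : b (k + 2) + a (b (k + 1)) = k + 2 := idB (k + 1)
    have e2 : b (k + 1) + a (b k) = k + 1 := idB k
    rw [h2] at e1
    omega
  -- a flat value of b is never of the form j + b j for a step j
  have hB3 : ∀ k j : ℕ, b (k + 2) = b (k + 1) → b (j + 2) = b (j + 1) + 1 →
      (j + 2) + b (j + 2) ≠ b (k + 2) := by
    intro k j hflat hstep heq
    have h1 : a (b (k + 2)) = j + 2 := (key (b (k + 2))).1 (j + 2) (by omega) heq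
    have h2 : a ((j + 1) + b (j + 1) + 1) = j + 2 :=
      (key ((j + 1) + b (j + 1) + 1)).2.1 (j + 1) (by omega) rfl
    have hstep_k : b (k + 1) = b k + 1 := by
      rcases bStep k with h | h
      · exact absurd ⟨hflat, h⟩ (noTriple k)
      · exact h
    have hbk : b k = (j + 1) + b (j + 1) + 1 := by omega
    have e1 : b (k + 2) + a (b (k + 1)) = k + 2 := idB (k + 1)
    have e2 : b (k + 1) + a (b k) = k + 1 := idB k
    rw [hbk, h2] at e2
    rw [hflat] at h1
    rw [h1] at e1
    omega
  -- a value attained only once by b is of the form j + b j for a step j, occurring early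
  have hB4 : ∀ k : ℕ, b (k + 2) = b (k + 1) + 1 → b (k + 1) = b k + 1 → 2 ≤ b (k + 1) →
      ∃ j, b (j + 2) = b (j + 1) + 1 ∧ (j + 2) + b (j + 2) = b (k + 1) ∧
        (j + 2) + b (k + 1) = k + 1 := by
    intro k hs2 hs1 hv
    have e1 : b (k + 2) + a (b (k + 1)) = k + 2 := idB (k + 1)
    have e2 : b (k + 1) + a (b k) = k + 1 := idB k
    rw [hs1] at e1
    have hXY : a (b k + 1) = a (b k) := by omega
    have e3 : a (b k + 1) + b (a (b k)) = b k + 1 := idA (b k)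
    rw [hXY] at e3
    -- now e3 : a (b k) + b (a (b k)) = b k + 1, and j + b j = b (k+1) for j = a (b k)
    have hJ2 : 2 ≤ a (b k) := by
      by_contra hcon
      have h1 : 1 ≤ a (b k) := aPos _
      have : a (b k) = 1 := by omega
      rw [this, hb1] at e3
      omega
    obtain ⟨J, hJ⟩ : ∃ J, a (b k) = J + 2 := ⟨a (b k) - 2, by omega⟩
    rw [hJ] at e3
    rcases bStep (J + 1) with hfl | hst
    · exfalso
      have hKA : a ((J + 1) + b (J + 1)) = J + 1 :=
        (key ((J + 1) + b (J + 1))).1 (J + 1) (by omega) rfl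
      have hfl' : b (J + 2) = b (J + 1) := hfl
      have hidx : (J + 1) + b (J + 1) = b k := by omega
      rw [hidx] at hKA
      omega
    · refine ⟨J, hst, by omega, by omega⟩
  -- a flat value is at least 2
  have flatGe2 : ∀ k : ℕ, b (k + 2) = b (k + 1) → 2 ≤ b (k + 2) := by
    intro k hf
    have h1 : 1 ≤ b (k + 2) := by
      have := bMono (show 2 ≤ k + 2 by omega)
      rw [hb2] at this; omega
    by_contra hcon
    have hbk2 : b (k + 2) = 1 := by omega
    have hbk1 : b (k + 1) = 1 := by omega
    rcases Nat.eq_zero_or_pos k with h0 | h0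
    · subst h0
      rw [hb1] at hbk1
      omega
    · have h3 : 3 ≤ k + 2 := by omega
      have := bMono h3
      rw [hb3] at this
      omega
  -- two distinct flats carry distinct values
  have flatUniq : ∀ i k : ℕ, i < k → b (i + 2) = b (i + 1) → b (k + 2) = b (k + 1) →
      b (i + 2) ≠ b (k + 2) := by
    intro i k hik hfi hfk heq
    rcases Nat.lt_or_ge (i + 1) k with hk | hk
    · have h1 : b (i + 2) ≤ b (i + 3) := bMono (by omega)
      have h2 : b (i + 3) ≤ b (k + 1) := bMono (by omega)
      have h3 : b (i + 3) = b (i + 2) := by omega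
      exact noTriple (i + 1) ⟨h3, hfi⟩
    · have hk' : k = i + 1 := by omega
      subst hk'
      have hfk' : b (i + 3) = b (i + 2) := hfk
      exact noTriple (i + 1) ⟨hfk', hfi⟩
  -- main induction: z and the partial sums are explicitly determined
  have zmain : ∀ n : ℕ, 1 ≤ n →
      ((∑ i ∈ Finset.Icc 1 n, z i) = 1 + (n + 1) * b n ∧
       (∀ j, j + 2 ≤ n →
          (b (j + 2) = b (j + 1) → z (j + 2) = b (j + 2)) ∧
          (b (j + 2) = b (j + 1) + 1 → z (j + 2) = (j + 2) + b (j + 2)))) := by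
    intro n hn
    induction n, hn using Nat.le_induction with
    | base =>
      constructor
      · simp [hz1, hb1]
      · intro j hj; omega
    | succ n hn IH =>
      obtain ⟨k, rfl⟩ : ∃ k, n = k + 1 := ⟨n - 1, by omega⟩
      obtain ⟨hS, hzi⟩ := IH
      have hleast := hz (k + 2) (by omega)
      have hmem := hleast.1
      have hlb := hleast.2
      obtain ⟨hpos, hnotin, hres⟩ := hmem
      have hres' : ((∑ i ∈ Finset.Icc 1 (k + 1), z i) + z (k + 2)) % (k + 3) = 1 := hres
      have hnotin' : ∀ i ∈ Finset.Icc 1 (k + 1), z i ≠ z (k + 2) := hnotin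
      rcases bStep (k + 1) with hflat | hstep
      · -- FLAT case : z (k+2) = b (k+2)
        have hflat' : b (k + 2) = b (k + 1) := hflat
        have hv2 : 2 ≤ b (k + 2) := flatGe2 k hflat'
        have hbb2 : b (k + 2) ≤ k + 1 := bBnd (k + 1)
        have hm2 : ∀ i ∈ Finset.Icc 1 (k + 1), z i ≠ b (k + 2) := by
          intro i hi
          rw [Finset.mem_Icc] at hi
          rcases Nat.lt_or_ge i 2 with h1 | h2
          · have hi1 : i = 1 := by omega
            rw [hi1, hz1]; omega
          · obtain ⟨j, rfl⟩ : ∃ j, i = j + 2 := ⟨i - 2, by omega⟩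
            rcases bStep (j + 1) with hfi | hsi
            · have hfi' : b (j + 2) = b (j + 1) := hfi
              have hzj : z (j + 2) = b (j + 2) := (hzi j (by omega)).1 hfi'
              rw [hzj]
              exact flatUniq j k (by omega) hfi' hflat'
            · have hsi' : b (j + 2) = b (j + 1) + 1 := hsi
              have hzj : z (j + 2) = (j + 2) + b (j + 2) := (hzi j (by omega)).2 hsi'
              rw [hzj]
              exact hB3 k j hflat' hsi'
        have hm3 : ((∑ i ∈ Finset.Icc 1 (k + 1), z i) + b (k + 2)) % (k + 3) = 1 := by
          have e : (∑ i ∈ Finset.Icc 1 (k + 1), z i) + b (k + 2) = 1 + (k + 3) * b (k + 1) := by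
            rw [hS, hflat']; ring
          rw [e, Nat.add_mul_mod_self_left]
          exact Nat.mod_eq_of_lt (by omega)
        have hub : z (k + 2) ≤ b (k + 2) := hlb ⟨by omega, hm2, hm3⟩
        have hc : ((∑ i ∈ Finset.Icc 1 (k + 1), z i) + z (k + 2)) % (k + 3)
            = ((∑ i ∈ Finset.Icc 1 (k + 1), z i) + b (k + 2)) % (k + 3) := by
          rw [hres', hm3]
        have hcc : z (k + 2) % (k + 3) = b (k + 2) % (k + 3) :=
          Nat.ModEq.add_left_cancel' _ hc
        have hzN : z (k + 2) = b (k + 2) := by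
          rw [Nat.mod_eq_of_lt (by omega), Nat.mod_eq_of_lt (by omega : b (k+2) < k + 3)] at hcc
          exact hcc
        constructor
        · rw [Finset.sum_Icc_succ_top (by omega : (1:ℕ) ≤ k + 2) z, hS, hzN, hflat']
          ring
        · intro j hj
          rcases Nat.lt_or_ge (j + 2) (k + 2) with h1 | h1
          · exact hzi j (by omega)
          · have hjk : j = k := by omega
            subst hjk
            constructor
            · intro _; exact hzN
            · intro h; omega
      · -- STEP case : z (k+2) = (k+2) + b (k+2)
        have hstep' : b (k + 2) = b (k + 1) + 1 := hstep
        have hbb1 : b (k + 1) ≤ k := bBnd k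
        have hbb2 : b (k + 2) ≤ k + 1 := bBnd (k + 1)
        have hm2 : ∀ i ∈ Finset.Icc 1 (k + 1), z i ≠ (k + 2) + b (k + 2) := by
          intro i hi
          rw [Finset.mem_Icc] at hi
          rcases Nat.lt_or_ge i 2 with h1 | h2
          · have hi1 : i = 1 := by omega
            rw [hi1, hz1]; omega
          · obtain ⟨j, rfl⟩ : ∃ j, i = j + 2 := ⟨i - 2, by omega⟩
            have hmono : b (j + 2) ≤ b (k + 1) := bMono (by omega)
            rcases bStep (j + 1) with hfi | hsi
            · have hfi' : b (j + 2) = b (j + 1) := hfi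
              have hzj : z (j + 2) = b (j + 2) := (hzi j (by omega)).1 hfi'
              rw [hzj]; omega
            · have hsi' : b (j + 2) = b (j + 1) + 1 := hsi
              have hzj : z (j + 2) = (j + 2) + b (j + 2) := (hzi j (by omega)).2 hsi'
              rw [hzj]; omega
        have hm3 : ((∑ i ∈ Finset.Icc 1 (k + 1), z i) + ((k + 2) + b (k + 2))) % (k + 3) = 1 := by
          have e : (∑ i ∈ Finset.Icc 1 (k + 1), z i) + ((k + 2) + b (k + 2))
              = 1 + (k + 3) * (b (k + 1) + 1) := by
            rw [hS, hstep']; ring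
          rw [e, Nat.add_mul_mod_self_left]
          exact Nat.mod_eq_of_lt (by omega)
        have hub : z (k + 2) ≤ (k + 2) + b (k + 2) := hlb ⟨by omega, hm2, hm3⟩
        have hc : ((∑ i ∈ Finset.Icc 1 (k + 1), z i) + z (k + 2)) % (k + 3)
            = ((∑ i ∈ Finset.Icc 1 (k + 1), z i) + ((k + 2) + b (k + 2))) % (k + 3) := by
          rw [hres', hm3]
        have hcc : z (k + 2) % (k + 3) = ((k + 2) + b (k + 2)) % (k + 3) :=
          Nat.ModEq.add_left_cancel' _ hc
        have hpmod : ((k + 2) + b (k + 2)) % (k + 3) = b (k + 1) := by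
          have e2 : (k + 2) + b (k + 2) = b (k + 1) + (k + 3) * 1 := by omega
          rw [e2, Nat.add_mul_mod_self_left]
          exact Nat.mod_eq_of_lt (by omega)
        have hzmod : z (k + 2) % (k + 3) = b (k + 1) := by rw [hcc, hpmod]
        have hdm := Nat.div_add_mod (z (k + 2)) (k + 3)
        rw [hzmod] at hdm
        have hzN : z (k + 2) = (k + 2) + b (k + 2) := by
          rcases Nat.eq_zero_or_pos (z (k + 2) / (k + 3)) with hq | hq
          · -- z (k+2) = b (k+1) : contradiction, that value is used or zero
            exfalso
            rw [hq, Nat.mul_zero] at hdm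
            -- hdm : 0 + b (k+1) = z (k+2)
            have hzv : z (k + 2) = b (k + 1) := by omega
            rcases Nat.lt_or_ge (b (k + 1)) 2 with hvlt | hvge
            · rcases Nat.eq_zero_or_pos (b (k + 1)) with hv0 | hv1
              · omega
              · -- b (k+1) = 1 = z 1
                have hne := hnotin' 1 (by rw [Finset.mem_Icc]; omega)
                rw [hz1] at hne
                omega
            · -- b (k+1) ≥ 2
              rcases bStep k with hf2 | hs2
              · -- flat at k+1 : the value was consumed at time k+1
                have hk1 : 1 ≤ k := by
                  by_contra hcon
                  have hk0 : k = 0 := by omega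
                  rw [hk0, hb1] at hvge
                  omega
                obtain ⟨k', rfl⟩ : ∃ k', k = k' + 1 := ⟨k - 1, by omega⟩
                have hf2' : b (k' + 2) = b (k' + 1) := hf2
                have hzj : z (k' + 2) = b (k' + 2) := (hzi k' (by omega)).1 hf2'
                have hne := hnotin' (k' + 2) (by rw [Finset.mem_Icc]; omega)
                rw [hzj] at hne
                omega
              · -- double step : the value appeared as an early large value
                have hs2' : b (k + 1) = b k + 1 := hs2
                obtain ⟨j, hjs, hjv, hjt⟩ := hB4 k hstep' hs2' hvge
                have hzj : z (j + 2) = (j + 2) + b (j + 2) := (hzi j (by omega)).2 hjs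
                have hne := hnotin' (j + 2) (by rw [Finset.mem_Icc]; omega)
                rw [hzj] at hne
                omega
          · -- quotient ≥ 1 : z (k+2) ≥ (k+3) + b (k+1), hence equality
            have hge : (k + 3) ≤ (k + 3) * (z (k + 2) / (k + 3)) :=
              Nat.le_mul_of_pos_right _ hq
            -- avoid nonlinear arithmetic in omega
            generalize hT : (k + 3) * (z (k + 2) / (k + 3)) = T at hdm hge
            omega
        constructor
        · rw [Finset.sum_Icc_succ_top (by omega : (1:ℕ) ≤ k + 2) z, hS, hzN, hstep']
          ring
        · intro j hj
          rcases Nat.lt_or_ge (j + 2) (k + 2) with h1 | h1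
          · exact hzi j (by omega)
          · have hjk : j = k := by omega
            subst hjk
            constructor
            · intro h; omega
            · intro _; exact hzN
  -- conclude : m n = b n
  intro n hn
  have hSn := (zmain n hn).1
  have hm' := hm n hn
  have hsplit : (∑ i ∈ Finset.Icc 1 n, z i) = z 1 + ∑ i ∈ Finset.Icc 2 n, z i := by
    have hins : Finset.Icc 1 n = insert 1 (Finset.Icc 2 n) := by
      ext x
      simp only [Finset.mem_Icc, Finset.mem_insert]
      omega
    rw [hins, Finset.sum_insert (by simp)]
  rw [hz1] at hsplit
  have h2 : 1 + (n + 1) * b n = 1 + ∑ i ∈ Finset.Icc 2 n, z i := by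
    rw [← hSn, hsplit]
  have h3 : (n + 1) * b n = ∑ i ∈ Finset.Icc 2 n, z i := Nat.add_left_cancel h2
  have h4 : (n + 1) * m n = (n + 1) * b n := by rw [hm', h3]
  exact (Nat.eq_of_mul_eq_mul_left (by omega) h4).symm
end
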